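/- arXiv:1703.09361 — 14 statements merged into one kernel-verified Lean document; each statement's English description precedes it below -/
import Mathlib

section
/- Let G be an n×N matrix over F_q, let δ_c ≥ 0, and for each receiver i ∈ [m] let X_i ⊆ [n] be its side information set and f(i) ∉ X_i its wanted index. Define I(q,G,δ_s) = ∪_i { z ∈ F_q^n : wt(z restricted to X_i) ≤ 2δ_s and z_{f(i)} ≠ 0 }. Then G is a valid generator matrix of a (δ_s,δ_c)-generalized error-correcting index code (i.e., every receiver can decode x_{f(i)} from xG + ε with wt(ε) ≤ δ_c and side information having at most δ_s symbol errors) if and only if wt(zG) ≥ 2δ_c + 1 for all z ∈ I(q,G,δ_s). -/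
/-!
Receiver `i` confuses `x` and `x'` exactly when the Hamming balls of radius `δc` around `xG` and
`x'G` meet. Hamming space is geodesic (a word at distance `≤ a + b` from another splits the way
with a word at distances `≤ a` and `≤ b`), so the balls meet iff `wt(xG - x'G) ≤ 2δc`.
By linearity, with `z = x' - x`, the condition on pairs of messages becomes the condition on `z`.
-/

open Finset

theorem exists_hammingDist_le_le_of_hammingDist_le {ι : Type*} [Fintype ι] {β : ι → Type*}
    [∀ i, DecidableEq (β i)] {x y : ∀ i, β i} {a b : ℕ} (h : hammingDist x y ≤ a + b) :
    ∃ z, hammingDist x z ≤ a ∧ hammingDist z y ≤ b := by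
  classical
  set D := univ.filter fun i => x i ≠ y i
  obtain ⟨T, hTD, hT⟩ := exists_subset_card_eq (min_le_left #D a)
  have hxy {i} (hi : i ∈ T) : x i ≠ y i := (mem_filter.1 (hTD hi)).2
  refine ⟨fun i => if i ∈ T then y i else x i, ?_, ?_⟩
  · have : univ.filter (fun i => x i ≠ if i ∈ T then y i else x i) = T := by
      ext i; by_cases hi : i ∈ T <;> simp [hi, hxy]
    rw [hammingDist, this, hT]
    exact min_le_right _ _
  · have : univ.filter (fun i => (if i ∈ T then y i else x i) ≠ y i) = D \ T := by
      ext i; by_cases hi : i ∈ T <;> simp [hi, D]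
    rw [hammingDist, this, card_sdiff_of_subset hTD, hT]
    change #D ≤ a + b at h
    omega

theorem forall_add_ne_add_iff_lt_hammingDist {ι β : Type*} [Fintype ι] [AddGroup β]
    [DecidableEq β] (u v : ι → β) (r : ℕ) :
    (∀ e e' : ι → β, hammingNorm e ≤ r → hammingNorm e' ≤ r → u + e ≠ v + e') ↔
      2 * r < hammingDist u v := by
  rw [← not_iff_not]
  push Not
  constructor
  · rintro ⟨e, e', he, he', huv⟩
    calc hammingDist u v ≤ hammingDist u (u + e) + hammingDist (v + e') v := by
          rw [← huv]; exact hammingDist_triangle _ _ _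
      _ = hammingNorm e + hammingNorm e' := by
          rw [hammingDist_comm _ v, hammingDist_eq_hammingNorm, hammingDist_eq_hammingNorm,
            neg_add_cancel_left, neg_add_cancel_left]
      _ ≤ 2 * r := by omega
  · intro h
    obtain ⟨w, huw, hwv⟩ := exists_hammingDist_le_le_of_hammingDist_le (h.trans (two_mul r).le)
    refine ⟨-u + w, -v + w, ?_, ?_, by rw [add_neg_cancel_left, add_neg_cancel_left]⟩
    · rwa [← hammingDist_eq_hammingNorm]
    · rwa [← hammingDist_eq_hammingNorm, hammingDist_comm]

theorem stmt0_general {F : Type} [Field F] [DecidableEq F]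
    {n N m : ℕ} (δs δc : ℕ)
    (X : Fin m → Finset (Fin n)) (f : Fin m → Fin n)
    (G : Matrix (Fin n) (Fin N) F) :
    (∀ i : Fin m, ∀ x x' : Fin n → F,
        x (f i) ≠ x' (f i) →
        ((X i).filter (fun j => x j ≠ x' j)).card ≤ 2 * δs →
        ∀ e e' : Fin N → F, hammingNorm e ≤ δc → hammingNorm e' ≤ δc →
          Matrix.vecMul x G + e ≠ Matrix.vecMul x' G + e') ↔
      (∀ z : Fin n → F,
        (∃ i : Fin m, z (f i) ≠ 0 ∧
          ((X i).filter (fun j => z j ≠ 0)).card ≤ 2 * δs) →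
        2 * δc + 1 ≤ hammingNorm (Matrix.vecMul z G)) := by
  simp_rw [forall_add_ne_add_iff_lt_hammingDist]
  constructor
  · rintro h z ⟨i, hz, hsupp⟩
    simpa [hammingDist_zero_right] using h i z 0 (by simpa using hz) (by simpa using hsupp)
  · intro h i x x' hx hsupp
    rw [hammingDist_eq_hammingNorm, neg_add_eq_sub, ← Matrix.sub_vecMul]
    refine h (x' - x) ⟨i, sub_ne_zero.2 hx.symm, ?_⟩
    simpa [sub_ne_zero, eq_comm] using hsupp

/-- A matrix `G` is a valid generator matrix of a
`(δs, δc)`-generalized error-correcting index code iff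
`wt(zG) ≥ 2δc + 1` for all `z ∈ I(q, G, δs)`. -/
theorem stmt0 {F : Type} [Field F] [DecidableEq F]
    {n N m : ℕ} (δs δc : ℕ)
    (X : Fin m → Finset (Fin n)) (f : Fin m → Fin n)
    (hf : ∀ i, f i ∉ X i)
    (G : Matrix (Fin n) (Fin N) F) :
    (∀ i : Fin m, ∀ x x' : Fin n → F,
        x (f i) ≠ x' (f i) →
        ((X i).filter (fun j => x j ≠ x' j)).card ≤ 2 * δs →
        ∀ e e' : Fin N → F, hammingNorm e ≤ δc → hammingNorm e' ≤ δc →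
          Matrix.vecMul x G + e ≠ Matrix.vecMul x' G + e') ↔
      (∀ z : Fin n → F,
        (∃ i : Fin m, z (f i) ≠ 0 ∧
          ((X i).filter (fun j => z j ≠ 0)).card ≤ 2 * δs) →
        2 * δc + 1 ≤ hammingNorm (Matrix.vecMul z G)) :=
  stmt0_general δs δc X f G
end

section
/- For an index code with side information errors (δ_c = 0), a matrix G ∈ F_q^{n×N} is a valid generator matrix if and only if zG ≠ 0 for all z ∈ I(q,G,δ_s), where I(q,G,δ_s) = ∪_{i∈[m]} { z ∈ F_q^n : wt(z_{X_i}) ≤ 2δ_s, z_{f(i)} ≠ 0 }. -/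
/-!
A decoder for receiver `i` exists iff any two messages with the same codeword that are both
consistent with some received side information agree in coordinate `f i`. For a linear code the
difference `z` of two such messages lies in the kernel of `G`, and by the triangle inequality its
restriction to `X i` has weight at most `2 δs`. Conversely, a kernel vector `z` of weight at most
`2 δs` on `X i` has a Hamming midpoint within `δs` of both `0` and `z` on `X i`, which makes the
messages `0` and `z` indistinguishable to receiver `i`, although they differ at `f i` when
`z (f i) ≠ 0`.
-/
open Finset Matrix

theorem hammingNorm_sub {ι : Type*} [Fintype ι] {β : ι → Type*} [∀ i, AddGroup (β i)]
    [∀ i, DecidableEq (β i)] (x y : ∀ i, β i) : hammingNorm (x - y) = hammingDist x y := by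
  simp_rw [hammingNorm, hammingDist, Pi.sub_apply, sub_ne_zero]

theorem hammingNorm_restrict {ι β : Type*} [Zero β] [DecidableEq β] (s : Finset ι) (z : ι → β) :
    hammingNorm (s.restrict z) = #(s.filter (z · ≠ 0)) := by
  rw [hammingNorm, univ_eq_attach]
  exact (congrArg card (filter_attach (z · ≠ 0) s)).trans (by rw [card_map, card_attach])

theorem exists_hammingDist_le_le {ι : Type*} [Fintype ι] {β : ι → Type*} [∀ i, DecidableEq (β i)]
    {x y : ∀ i, β i} {a b : ℕ} (h : hammingDist x y ≤ a + b) :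
    ∃ w, hammingDist x w ≤ a ∧ hammingDist w y ≤ b := by
  classical
  set S := univ.filter (fun i => x i ≠ y i)
  obtain ⟨t, htS, ht⟩ := exists_subset_card_eq (min_le_right a #S)
  refine ⟨fun i => if i ∈ t then y i else x i, ?_, ?_⟩
  · calc hammingDist x _ ≤ #t := card_le_card fun i hi => by
          by_contra hit; simp [hit] at hi
      _ ≤ a := ht ▸ min_le_left _ _
  · calc hammingDist _ y ≤ #(S \ t) := card_le_card fun i hi => by
          by_cases hit : i ∈ t <;> simp_all [S]
      _ ≤ b := by rw [card_sdiff_of_subset htS, ht]; change #S ≤ a + b at h; omega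

theorem exists_decoder_iff {α β γ δ : Type*} [Nonempty δ] (enc : α → β) (target : α → δ)
    (ok : γ → α → Prop) :
    (∃ D : β → γ → δ, ∀ x y, ok y x → D (enc x) y = target x) ↔
      ∀ x x' y, enc x = enc x' → ok y x → ok y x' → target x = target x' := by
  classical
  constructor
  · rintro ⟨D, hD⟩ x x' y henc hx hx'
    rw [← hD x y hx, ← hD x' y hx', henc]
  · intro h
    refine ⟨fun b y => if hb : ∃ x, enc x = b ∧ ok y x then target hb.choose
      else Classical.arbitrary δ, fun x y hx => ?_⟩
    have hb : ∃ x', enc x' = enc x ∧ ok y x' := ⟨x, rfl, hx⟩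
    dsimp only
    rw [dif_pos hb]
    exact h _ _ y hb.choose_spec.1 hb.choose_spec.2 hx

theorem confusable_agree_iff_ker {ι A M : Type*} [AddCommGroup A] [DecidableEq A] [AddCommGroup M]
    (enc : (ι → A) →+ M) (s : Finset ι) (k : ι) (δ : ℕ) :
    (∀ x x' (y : s → A), enc x = enc x' → hammingDist y (s.restrict x) ≤ δ →
        hammingDist y (s.restrict x') ≤ δ → x k = x' k) ↔
      ∀ z, z k ≠ 0 → hammingNorm (s.restrict z) ≤ 2 * δ → enc z ≠ 0 := by
  constructor
  · intro h z hzk hz hencz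
    rw [← hammingDist_zero_left, two_mul] at hz
    obtain ⟨w, hw0, hwz⟩ := exists_hammingDist_le_le hz
    refine hzk (h 0 z w (by rw [map_zero, hencz]) ?_ hwz).symm
    rwa [hammingDist_comm]
  · intro h x x' y henc hx hx'
    by_contra hne
    have hker : enc (x - x') = 0 := by rw [map_sub, henc, sub_self]
    refine h (x - x') (sub_ne_zero.mpr hne) ?_ hker
    calc hammingNorm (s.restrict x - s.restrict x')
        = hammingDist (s.restrict x) (s.restrict x') := hammingNorm_sub _ _
      _ ≤ hammingDist (s.restrict x) y + hammingDist y (s.restrict x') := hammingDist_triangle _ _ _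
      _ ≤ 2 * δ := by rw [hammingDist_comm] at hx; omega

theorem stmt1_general {F : Type} [Field F] [DecidableEq F]
    {n N m : ℕ} (δs : ℕ)
    (X : Fin m → Finset (Fin n)) (f : Fin m → Fin n)
    (G : Matrix (Fin n) (Fin N) F) :
    (∀ i : Fin m, ∃ D : (Fin N → F) → ({j // j ∈ X i} → F) → F,
        ∀ x : Fin n → F, ∀ xhat : {j // j ∈ X i} → F,
          hammingNorm (fun j : {j // j ∈ X i} => xhat j - x j.1) ≤ δs →
          D (Matrix.vecMul x G) xhat = x (f i)) ↔
      (∀ z : Fin n → F,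
        (∃ i : Fin m, z (f i) ≠ 0 ∧
          ((X i).filter (fun j => z j ≠ 0)).card ≤ 2 * δs) →
        Matrix.vecMul z G ≠ 0) := by
  have receiver_iff : ∀ i, (∃ D : (Fin N → F) → ({j // j ∈ X i} → F) → F,
      ∀ x xhat, hammingNorm (fun j : {j // j ∈ X i} => xhat j - x j.1) ≤ δs →
        D (x ᵥ* G) xhat = x (f i)) ↔
        ∀ z : Fin n → F, z (f i) ≠ 0 → #((X i).filter (z · ≠ 0)) ≤ 2 * δs → z ᵥ* G ≠ 0 :=
    fun i => by
      have h := (exists_decoder_iff _ _ _).trans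
        (confusable_agree_iff_ker G.vecMulLinear.toAddMonoidHom (X i) (f i) δs)
      simp only [← hammingNorm_sub, hammingNorm_restrict, LinearMap.toAddMonoidHom_coe,
        vecMulLinear_apply] at h
      exact h
  simp only [receiver_iff, forall_exists_index, and_imp]
  exact forall_comm

/-- For an ICSIE (`δc = 0`), `G` is a valid generator matrix
(every receiver can always recover its wanted packet from `xG` and its
side information having at most `δs` symbol errors) iff `zG ≠ 0` for all
`z ∈ I(q, G, δs)`. -/
theorem stmt1 {F : Type} [Field F] [DecidableEq F]
    {n N m : ℕ} (δs : ℕ)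
    (X : Fin m → Finset (Fin n)) (f : Fin m → Fin n)
    (hf : ∀ i, f i ∉ X i)
    (G : Matrix (Fin n) (Fin N) F) :
    (∀ i : Fin m, ∃ D : (Fin N → F) → ({j // j ∈ X i} → F) → F,
        ∀ x : Fin n → F, ∀ xhat : {j // j ∈ X i} → F,
          hammingNorm (fun j : {j // j ∈ X i} => xhat j - x j.1) ≤ δs →
          D (Matrix.vecMul x G) xhat = x (f i)) ↔
      (∀ z : Fin n → F,
        (∃ i : Fin m, z (f i) ≠ 0 ∧
          ((X i).filter (fun j => z j ≠ 0)).card ≤ 2 * δs) →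
        Matrix.vecMul z G ≠ 0) :=
  stmt1_general δs X f G
end

section
/- Every generalized fitting matrix A_g for a side information graph G satisfies z·A_g ≠ 0 for all z ∈ I(q,G,δ_s); hence A_g is a valid ICSIE generator matrix. -/
/-- Every generalized fitting matrix `A` for the side information
graph satisfies `z ⬝ A ≠ 0` for all `z ∈ I(q, G, δs)`. -/
theorem stmt3 {F : Type} [Field F] [DecidableEq F]
    {n m : ℕ} (δs : ℕ) {κ : Type}
    (X : Fin m → Finset (Fin n)) (f : Fin m → Fin n)
    (hf : ∀ i, f i ∉ X i)
    (A : Matrix (Fin n) κ F)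
    (hfit : ∀ i : Fin m, ∀ B : Finset (Fin n), B ⊆ X i →
        B.card = min (2 * δs) (X i).card →
        ∃ c : κ, A (f i) c = 1 ∧ (∀ a ∈ B, A a c = 0) ∧
          (∀ a : Fin n, a ∉ X i → a ≠ f i → A a c = 0)) :
    ∀ z : Fin n → F,
      (∃ i : Fin m, z (f i) ≠ 0 ∧
        ((X i).filter (fun j => z j ≠ 0)).card ≤ 2 * δs) →
      Matrix.vecMul z A ≠ 0 := by
  rintro z ⟨i, hzf, hcard⟩
  set S : Finset (Fin n) := (X i).filter (fun j => z j ≠ 0) with hS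
  have hSsub : S ⊆ X i := Finset.filter_subset _ _
  have hcard' : S.card ≤ min (2 * δs) (X i).card :=
    le_min hcard (Finset.card_le_card hSsub)
  obtain ⟨B, hSB, hBX, hBcard⟩ :=
    Finset.exists_subsuperset_card_eq hSsub hcard' (min_le_right _ _)
  obtain ⟨c, hc1, hc2, hc3⟩ := hfit i B hBX hBcard
  intro h0
  have hcol : Matrix.vecMul z A c = 0 := by rw [h0]; rfl
  have : Matrix.vecMul z A c = z (f i) := by
    rw [Matrix.vecMul, dotProduct]
    rw [Finset.sum_eq_single (f i)]
    · rw [hc1, mul_one]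
    · intro j _ hj
      by_cases hjX : j ∈ X i
      · by_cases hjB : j ∈ B
        · rw [hc2 j hjB, mul_zero]
        · have : z j = 0 := by
            by_contra hz
            exact hjB (hSB (Finset.mem_filter.mpr ⟨hjX, hz⟩))
          rw [this, zero_mul]
      · rw [hc3 j hjX hj, mul_zero]
    · intro h; exact absurd (Finset.mem_univ _) h
  rw [hcol] at this
  exact hzf this.symm
end

section
/- The optimal codelength of the (δ_s, G)-ICSIE over F_q equals minrk_q(δ_s, G), the minimum rank over F_q among all generalized fitting matrices for G. -/
/-!
Encoding with `G` is a linear code whose column space `U` must contain, for every request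
`p = ⟨i, B⟩`, a vector not orthogonal to any `z` that vanishes on the trusted side information
`X i \ B` and is nonzero at the demanded coordinate `f i`. By duality in `Fⁿ` this holds exactly
when `U` contains a vector equal to `1` at `f i` and supported in `(X i \ B) ∪ {f i}`, i.e. a
fitting column for `p`. Fitting columns chosen in `U` give a fitting matrix of rank at most
`dim U`, and conversely a basis of the column space of a fitting matrix `A` is an encoding
matrix with `rank A` columns.
-/

open Matrix Module Finset

theorem Finset.filter_subset_iff_forall_sdiff {α : Type*} [DecidableEq α] {s B : Finset α}
    {p : α → Prop} [DecidablePred p] : s.filter p ⊆ B ↔ ∀ a ∈ s \ B, ¬ p a := by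
  simp only [subset_iff, mem_filter, mem_sdiff, and_imp]
  grind

section DotProduct

variable {R ι : Type*} [Fintype ι]

theorem dotProduct_eq_mul_apply_of_forall_eq_zero [NonUnitalNonAssocSemiring R]
    {z c : ι → R} {t : ι} {T : Finset ι} (hc : ∀ a, a ∉ T → a ≠ t → c a = 0)
    (hz : ∀ a ∈ T, z a = 0) : z ⬝ᵥ c = z t * c t := by
  refine Finset.sum_eq_single t (fun a _ hat => ?_) (by simp)
  by_cases ha : a ∈ T
  · rw [hz a ha, zero_mul]
  · rw [hc a ha hat, mul_zero]

theorem Matrix.exists_mem_range_dotProduct_ne_zero_iff [CommSemiring R] {κ : Type*} [Fintype κ]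
    (G : Matrix ι κ R) (z : ι → R) :
    (∃ u ∈ LinearMap.range G.mulVecLin, z ⬝ᵥ u ≠ 0) ↔ z ᵥ* G ≠ 0 := by
  simp only [LinearMap.mem_range, mulVecLin_apply, exists_exists_eq_and, dotProduct_mulVec,
    Ne, ← not_forall, dotProduct_eq_zero_iff]

end DotProduct

section Fitting

variable {R ι P : Type*} (t : P → ι) (T : P → Finset ι)

def IsFittingMatrix [Zero R] [One R] (A : Matrix ι P R) : Prop :=
  ∀ p, A (t p) p = 1 ∧ ∀ a, a ∉ T p → a ≠ t p → A a p = 0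

/-- `z` stands for the difference of two messages that agree on the trusted coordinates `T p` but
differ at the demanded one `t p`; their encodings must differ. -/
def IsValidEncoding [Semiring R] [Fintype ι] {κ : Type*} [Fintype κ] (G : Matrix ι κ R) : Prop :=
  ∀ p (z : ι → R), (∀ a ∈ T p, z a = 0) → z (t p) ≠ 0 → z ᵥ* G ≠ 0

end Fitting

section Field

variable {F ι : Type*} [Field F] [Fintype ι]

theorem exists_dotProduct_ne_zero_of_notMem [DecidableEq ι] {U : Submodule F (ι → F)}
    {v : ι → F} (hv : v ∉ U) : ∃ y : ι → F, (∀ u ∈ U, y ⬝ᵥ u = 0) ∧ y ⬝ᵥ v ≠ 0 := by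
  obtain ⟨φ, hφv, hφU⟩ := U.exists_dual_map_eq_bot_of_notMem hv inferInstance
  have hφ (u : ι → F) : (dotProductEquiv F ι).symm φ ⬝ᵥ u = φ u :=
    LinearMap.congr_fun ((dotProductEquiv F ι).apply_symm_apply φ) u
  refine ⟨(dotProductEquiv F ι).symm φ, fun u hu => ?_, by rwa [hφ]⟩
  rw [hφ, ← Submodule.mem_bot F, ← hφU]
  exact Submodule.mem_map_of_mem hu

theorem Matrix.exists_range_mulVecLin_eq (U : Submodule F (ι → F)) :
    ∃ G : Matrix ι (Fin (finrank F U)) F, LinearMap.range G.mulVecLin = U := by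
  let b := Module.finBasis F U
  refine ⟨Matrix.of fun a j => (b j : ι → F) a, ?_⟩
  have hcol : (Matrix.of fun a j => (b j : ι → F) a).col = U.subtype ∘ b := rfl
  rw [range_mulVecLin, hcol, Set.range_comp, Submodule.span_image, b.span_eq, Submodule.map_top,
    Submodule.range_subtype]

/-- The hard direction of the duality: if `e_t` were not in `U ⊔ {s | s vanishes off T}`, a
vector separating it would vanish on `T`, be nonzero at `t` and be orthogonal to `U`. -/
theorem exists_mem_apply_eq_one_of_forall_exists_dotProduct_ne_zero [DecidableEq ι]
    {U : Submodule F (ι → F)} {t : ι} {T : Finset ι} (ht : t ∉ T)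
    (hU : ∀ z : ι → F, (∀ a ∈ T, z a = 0) → z t ≠ 0 → ∃ u ∈ U, z ⬝ᵥ u ≠ 0) :
    ∃ c ∈ U, c t = 1 ∧ ∀ a, a ∉ T → a ≠ t → c a = 0 := by
  set V : Submodule F (ι → F) := Submodule.pi {a | a ∉ T} fun _ => ⊥
  have hsingle : Pi.single t 1 ∈ U ⊔ V := by
    by_contra hnot
    obtain ⟨y, hy, hyt⟩ := exists_dotProduct_ne_zero_of_notMem hnot
    have hyT : ∀ a ∈ T, y a = 0 := fun a ha => by
      simpa using hy (Pi.single a 1) (Submodule.mem_sup_right fun b hb => by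
        simp [show b ≠ a by rintro rfl; exact hb ha])
    obtain ⟨u, hu, hyu⟩ := hU y hyT (by simpa using hyt)
    exact hyu (hy u (Submodule.mem_sup_left hu))
  obtain ⟨c, hc, s, hs, hcs⟩ := Submodule.mem_sup.1 hsingle
  have hs_zero : ∀ a, a ∉ T → s a = 0 := fun a ha => hs a ha
  refine ⟨c, hc, ?_, fun a haT hat => ?_⟩
  · simpa [hs_zero t ht] using congrFun hcs t
  · simpa [hs_zero a haT, hat] using congrFun hcs a

variable {P : Type*} [Fintype P] {t : P → ι} {T : P → Finset ι}

theorem IsFittingMatrix.exists_isValidEncoding {A : Matrix ι P F} (hA : IsFittingMatrix t T A) :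
    ∃ G : Matrix ι (Fin A.rank) F, IsValidEncoding t T G := by
  obtain ⟨G, hG⟩ := exists_range_mulVecLin_eq (LinearMap.range A.mulVecLin)
  refine ⟨G, fun p z hzT hzt =>
    (exists_mem_range_dotProduct_ne_zero_iff G z).1 ⟨A.col p, ?_, ?_⟩⟩
  · rw [hG, range_mulVecLin]
    exact Submodule.subset_span ⟨p, rfl⟩
  · rwa [dotProduct_eq_mul_apply_of_forall_eq_zero (c := A.col p) (hA p).2 hzT, col_apply,
      (hA p).1, mul_one]

theorem IsValidEncoding.exists_isFittingMatrix [DecidableEq ι] {κ : Type*} [Fintype κ]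
    (ht : ∀ p, t p ∉ T p) {G : Matrix ι κ F} (hG : IsValidEncoding t T G) :
    ∃ A : Matrix ι P F, IsFittingMatrix t T A ∧ A.rank ≤ Fintype.card κ := by
  have hcol (p : P) : ∃ c ∈ LinearMap.range G.mulVecLin,
      c (t p) = 1 ∧ ∀ a, a ∉ T p → a ≠ t p → c a = 0 :=
    exists_mem_apply_eq_one_of_forall_exists_dotProduct_ne_zero (ht p) fun z hzT hzt =>
      (exists_mem_range_dotProduct_ne_zero_iff G z).2 (hG p z hzT hzt)
  choose c hcG hc using hcol
  refine ⟨Matrix.of fun a p => c p a, hc, ?_⟩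
  calc (Matrix.of fun a p => c p a).rank
      ≤ finrank F (LinearMap.range G.mulVecLin) := by
        rw [rank_eq_finrank_span_cols]
        exact Submodule.finrank_mono (Submodule.span_le.2 (Set.range_subset_iff.2 hcG))
    _ ≤ Fintype.card κ := G.rank_le_card_width

theorem sInf_isValidEncoding_eq_sInf_rank_isFittingMatrix [DecidableEq ι]
    (ht : ∀ p, t p ∉ T p) :
    sInf {N : ℕ | ∃ G : Matrix ι (Fin N) F, IsValidEncoding t T G} =
      sInf {r : ℕ | ∃ A : Matrix ι P F, IsFittingMatrix t T A ∧ A.rank = r} := by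
  refine csInf_eq_csInf_of_forall_exists_le ?_ ?_
  · rintro N ⟨G, hG⟩
    obtain ⟨A, hA, hrank⟩ := hG.exists_isFittingMatrix ht
    exact ⟨A.rank, ⟨A, hA, rfl⟩, hrank.trans_eq (Fintype.card_fin N)⟩
  · rintro r ⟨A, hA, rfl⟩
    exact ⟨A.rank, hA.exists_isValidEncoding, le_rfl⟩

end Field

section SideInformation

variable {S ι ρ : Type*} [DecidableEq ι] (X : ρ → Finset ι) (f : ρ → ι) (k : ℕ)

/-- A request `⟨i, B⟩`: receiver `i` demanding `f i`, with `B` the side-information coordinates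
that may be corrupted; the coordinates `X i \ B` are trusted. -/
abbrev Request := (i : ρ) × {B : Finset ι // B ⊆ X i ∧ B.card = min k (X i).card}

theorem isValidEncoding_request_iff [Semiring S] [DecidableEq S] [Fintype ι] {κ : Type*}
    [Fintype κ] (G : Matrix ι κ S) :
    IsValidEncoding (fun p : Request X k => f p.1) (fun p => X p.1 \ p.2.1) G ↔
      ∀ z : ι → S, (∃ i, z (f i) ≠ 0 ∧ ((X i).filter (fun j => z j ≠ 0)).card ≤ k) →
        z ᵥ* G ≠ 0 := by
  constructor
  · rintro hG z ⟨i, hzi, hcard⟩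
    obtain ⟨B, hzB, hBX, hB⟩ := exists_subsuperset_card_eq (filter_subset _ (X i))
      (le_min hcard (card_le_card (filter_subset _ _))) (min_le_right k _)
    exact hG ⟨i, B, hBX, hB⟩ z (by simpa using filter_subset_iff_forall_sdiff.1 hzB) hzi
  · intro hG p z hzT hzt
    refine hG z ⟨p.1, hzt, ?_⟩
    calc ((X p.1).filter (fun j => z j ≠ 0)).card
        ≤ p.2.1.card := card_le_card (filter_subset_iff_forall_sdiff.2 (by simpa using hzT))
      _ ≤ k := p.2.2.2.trans_le (min_le_left _ _)

theorem isFittingMatrix_request_iff [Zero S] [One S] (hf : ∀ i, f i ∉ X i)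
    (A : Matrix ι (Request X k) S) :
    IsFittingMatrix (fun p : Request X k => f p.1) (fun p => X p.1 \ p.2.1) A ↔
      ∀ p : Request X k, A (f p.1) p = 1 ∧ (∀ a ∈ p.2.1, A a p = 0) ∧
        (∀ a : ι, a ∉ X p.1 → a ≠ f p.1 → A a p = 0) := by
  refine forall_congr' fun p => and_congr_right fun _ => ?_
  constructor
  · intro hA
    refine ⟨fun a ha => hA a (by simp [ha]) ?_, fun a ha => hA a (by simp [ha])⟩
    rintro rfl
    exact hf p.1 (p.2.2.1 ha)
  · rintro ⟨hB, hX⟩ a haT haf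
    by_cases ha : a ∈ p.2.1
    · exact hB a ha
    · exact hX a (by simpa [ha] using haT) haf

end SideInformation

/-- The optimal codelength of the `(δs, G)`-ICSIE equals
`minrk_q(δs, G)`, the minimum rank among generalized fitting matrices. -/
theorem stmt4 {F : Type} [Field F] [DecidableEq F]
    {n m : ℕ} (δs : ℕ)
    (X : Fin m → Finset (Fin n)) (f : Fin m → Fin n)
    (hf : ∀ i, f i ∉ X i) :
    sInf {N : ℕ | ∃ G : Matrix (Fin n) (Fin N) F,
        ∀ z : Fin n → F,
          (∃ i : Fin m, z (f i) ≠ 0 ∧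
            ((X i).filter (fun j => z j ≠ 0)).card ≤ 2 * δs) →
          Matrix.vecMul z G ≠ 0} =
      sInf {r : ℕ | ∃ A : Matrix (Fin n)
          ((i : Fin m) ×
            {B : Finset (Fin n) // B ⊆ X i ∧ B.card = min (2 * δs) (X i).card}) F,
        (∀ p : (i : Fin m) ×
            {B : Finset (Fin n) // B ⊆ X i ∧ B.card = min (2 * δs) (X i).card},
          A (f p.1) p = 1 ∧ (∀ a ∈ p.2.1, A a p = 0) ∧
            (∀ a : Fin n, a ∉ X p.1 → a ≠ f p.1 → A a p = 0)) ∧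
        A.rank = r} := by
  simp only [← isValidEncoding_request_iff, ← isFittingMatrix_request_iff X f _ hf]
  exact sInf_isValidEncoding_eq_sInf_rank_isFittingMatrix
    fun p h => hf p.1 (mem_sdiff.1 h).1
end

section
/- In the decoding of an ICSIE with generator matrix G: let H^{(i)} be a matrix whose row space is the orthogonal complement of span({G_j}_{j ∈ {f(i)} ∪ Y_i}), and let s_i = H^{(i)} (x̃_{δ_s} G_{X_i})^T where x̃_{δ_s} = x_{X_i} − x̂_{X_i} has weight at most δ_s. If p_i is any vector in the row span of at most δ_s rows of G_{X_i} satisfying H^{(i)} p_i^T = s_i, then p_i = x̃_{δ_s} G_{X_i} + k for some k ∈ span({G_j}_{j ∈ Y_i}). -/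
/-!
The difference `v = p - x̃ G_{X_i}` is killed by `H`, so it lies in the double orthogonal
of `span{G_j : j ∈ {f i} ∪ Y_i}`, which is that span itself; write `v = l ⬝ G` with `l`
supported on `{f i} ∪ Y_i`. Then `z = c - e - l` satisfies `z ⬝ G = 0`, agrees with `c - e`
on `X_i` (so has weight at most `2 δs` there) and has `z (f i) = - l (f i)`. Validity of `G`
forces `l (f i) = 0`, i.e. `v ∈ span{G_j : j ∈ Y_i}`.
-/

section

open Matrix Submodule

variable {ι κ F : Type*} [Fintype ι] [Field F]

theorem dotProductBilin_isRefl :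
    LinearMap.BilinForm.IsRefl (dotProductBilin F F : LinearMap.BilinForm F (ι → F)) :=
  fun v w h => (dotProduct_comm w v).trans h

theorem dotProductBilin_nondegenerate [DecidableEq ι] :
    LinearMap.BilinForm.Nondegenerate (dotProductBilin F F : LinearMap.BilinForm F (ι → F)) := by
  have hsep : ∀ v : ι → F, (∀ w, v ⬝ᵥ w = 0) → v = 0 := fun v hv =>
    funext fun j => by simpa using hv (Pi.single j 1)
  exact ⟨hsep, fun v hv => hsep v fun w => (dotProduct_comm v w).trans (hv w)⟩

theorem mem_of_mulVec_eq_zero_of_span_rows_eq_orthogonal [DecidableEq ι]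
    {H : Matrix κ ι F} {W : Submodule F (ι → F)}
    (hH : ∀ u, u ∈ span F (Set.range fun r => H r) ↔ ∀ w ∈ W, w ⬝ᵥ u = 0)
    {v : ι → F} (hv : H *ᵥ v = 0) : v ∈ W := by
  have hrows : span F (Set.range fun r => H r) =
      LinearMap.BilinForm.orthogonal (dotProductBilin F F) W :=
    Submodule.ext hH
  have hker : span F (Set.range fun r => H r) ≤ LinearMap.ker ((dotProductBilin F F).flip v) :=
    span_le.2 (Set.range_subset_iff.2 fun r => congrFun hv r)
  rw [← LinearMap.BilinForm.orthogonal_orthogonal dotProductBilin_nondegenerate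
    dotProductBilin_isRefl W, ← hrows]
  exact fun u hu => hker hu

theorem mem_span_image_rows_iff {G : Matrix ι κ F} {T : Set ι} {v : κ → F} :
    v ∈ span F ((fun j => G j) '' T) ↔ ∃ l : ι → F, (∀ j ∉ T, l j = 0) ∧ l ᵥ* G = v := by
  constructor
  · intro hv
    obtain ⟨l, hl, rfl⟩ := (Finsupp.mem_span_image_iff_linearCombination F).1 hv
    refine ⟨l, fun j hj => Finsupp.notMem_support_iff.1 fun h => hj (hl h), ?_⟩
    rw [vecMul_eq_sum, Finsupp.linearCombination_apply, Finsupp.sum_fintype]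
    exact fun _ => zero_smul _ _
  · rintro ⟨l, hl, rfl⟩
    rw [vecMul_eq_sum]
    refine sum_mem fun j _ => ?_
    by_cases hj : j ∈ T
    · exact smul_mem _ _ (subset_span (Set.mem_image_of_mem _ hj))
    · rw [hl j hj, zero_smul]
      exact zero_mem _

end

theorem card_filter_sub_ne_zero_le {ι A : Type*} [DecidableEq ι] [AddGroup A] [DecidableEq A]
    (s : Finset ι) (c e : ι → A) :
    (s.filter fun j => c j - e j ≠ 0).card ≤
      (s.filter fun j => c j ≠ 0).card + (s.filter fun j => e j ≠ 0).card := by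
  refine (Finset.card_le_card fun j hj => ?_).trans (Finset.card_union_le _ _)
  simp only [Finset.mem_filter, Finset.mem_union] at hj ⊢
  by_contra! h
  exact hj.2 (by rw [h.1 hj.1, h.2 hj.1, sub_zero])

/-- Syndrome decoding of the ICSIE: any solution `p` of the
syndrome equation that is a combination of at most `δs` rows of `G_{X_i}`
equals `x̃ G_{X_i} + k` with `k ∈ span{G_j : j ∈ Y_i}`. -/
theorem stmt5 {F : Type} [Field F] [DecidableEq F]
    {n N m L : ℕ} (δs : ℕ)
    (X : Fin m → Finset (Fin n)) (f : Fin m → Fin n)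
    (hf : ∀ i, f i ∉ X i)
    (G : Matrix (Fin n) (Fin N) F)
    (hvalid : ∀ z : Fin n → F,
      (∃ i : Fin m, z (f i) ≠ 0 ∧
        ((X i).filter (fun j => z j ≠ 0)).card ≤ 2 * δs) →
      Matrix.vecMul z G ≠ 0)
    (i : Fin m)
    (H : Matrix (Fin L) (Fin N) F)
    -- the row space of `H` is the orthogonal complement of
    -- `span{G_j : j ∈ {f i} ∪ Y_i}` with respect to the dot product
    (hH : ∀ u : Fin N → F,
      u ∈ Submodule.span F (Set.range fun r : Fin L => H r) ↔
        ∀ w ∈ Submodule.span F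
          ((fun j : Fin n => G j) '' {j | j = f i ∨ (j ∉ X i ∧ j ≠ f i)}),
          dotProduct w u = 0)
    -- `e` is the side information error vector `x̃_{δs}` (supported on `X i`,
    -- of weight at most `δs`), so that `x̃_{δs} G_{X_i} = e ⬝ G`
    (e : Fin n → F) (he0 : ∀ j, j ∉ X i → e j = 0)
    (hecard : ((X i).filter (fun j => e j ≠ 0)).card ≤ δs)
    -- `p` is a combination of at most `δs` rows of `G_{X_i}`
    (p : Fin N → F) (c : Fin n → F) (hpc : p = Matrix.vecMul c G)
    (hc0 : ∀ j, j ∉ X i → c j = 0)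
    (hccard : ((X i).filter (fun j => c j ≠ 0)).card ≤ δs)
    -- `p` satisfies the syndrome equation `H pᵀ = s_i = H (x̃ G_{X_i})ᵀ`
    (hsyn : H.mulVec p = H.mulVec (Matrix.vecMul e G)) :
    ∃ k ∈ Submodule.span F
        ((fun j : Fin n => G j) '' {j | j ∉ X i ∧ j ≠ f i}),
      p = Matrix.vecMul e G + k := by
  set v := p - Matrix.vecMul e G with hv_def
  have hv : v ∈ Submodule.span F ((fun j => G j) '' {j | j = f i ∨ (j ∉ X i ∧ j ≠ f i)}) :=
    mem_of_mulVec_eq_zero_of_span_rows_eq_orthogonal hH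
      (by rw [Matrix.mulVec_sub, hsyn, sub_self])
  obtain ⟨l, hl, hlv⟩ := mem_span_image_rows_iff.1 hv
  have hlX : ∀ j ∈ X i, l j = 0 := fun j hj =>
    hl j fun h => h.elim (fun h => hf i (h ▸ hj)) fun h => h.1 hj
  have hz : Matrix.vecMul (c - e - l) G = 0 := by
    rw [Matrix.sub_vecMul, Matrix.sub_vecMul, ← hpc, hlv, sub_self]
  have hweight : ((X i).filter fun j => (c - e - l) j ≠ 0).card ≤ 2 * δs := by
    calc ((X i).filter fun j => (c - e - l) j ≠ 0).card
        = ((X i).filter fun j => c j - e j ≠ 0).card := by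
          congr 1
          refine Finset.filter_congr fun j hj => ?_
          rw [Pi.sub_apply, hlX j hj, sub_zero, Pi.sub_apply]
      _ ≤ _ := card_filter_sub_ne_zero_le _ c e
      _ ≤ 2 * δs := by omega
  have hlf : l (f i) = 0 := by
    by_contra h
    refine hvalid _ ⟨i, ?_, hweight⟩ hz
    simpa [hc0 _ (hf i), he0 _ (hf i)] using h
  refine ⟨v, mem_span_image_rows_iff.2 ⟨l, fun j hj => ?_, hlv⟩, by rw [hv_def]; abel⟩
  by_cases hjX : j ∈ X i
  · exact hlX j hjX
  · obtain rfl : j = f i := not_ne_iff.1 fun h => hj ⟨hjX, h⟩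
    exact hlf
end

section
/- Let Q be the set of all packet node indices of a side information graph G. Then Q is a δ_s-generalized independent set if and only if G is δ_s-acyclic (i.e., contains no δ_s-cycle). -/
/-- The set of all packet node indices is a `δs`-generalized
independent set iff the side information graph is `δs`-acyclic. -/
theorem stmt6 {n m : ℕ} (δs : ℕ)
    (X : Fin m → Finset (Fin n)) (f : Fin m → Fin n)
    (hf : ∀ i, f i ∉ X i) :
    (∀ K : Finset (Fin n), K.Nonempty →
      ∃ i : Fin m, ∃ Y' I' : Finset (Fin n),
        Y' ⊆ Finset.univ \ insert (f i) (X i) ∧ I' ⊆ X i ∧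
        I'.card ≤ 2 * δs ∧ K = insert (f i) (Y' ∪ I')) ↔
    (∀ B : Finset (Fin n), B.Nonempty →
      ¬ (∀ i : Fin m, f i ∈ B → 2 * δs + 1 ≤ ((X i) ∩ B).card)) := by
  constructor
  · intro h B hB hcyc
    obtain ⟨i, Y', I', hY, hI, hcard, hK⟩ := h B hB
    have hfB : f i ∈ B := by rw [hK]; exact Finset.mem_insert_self _ _
    have hge := hcyc i hfB
    have hsub : X i ∩ B ⊆ I' := by
      intro x hx
      simp only [Finset.mem_inter] at hx
      obtain ⟨hx1, hx2⟩ := hx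
      rw [hK] at hx2
      rcases Finset.mem_insert.mp hx2 with h1 | h2
      · exact absurd (h1 ▸ hx1) (hf i)
      · rcases Finset.mem_union.mp h2 with h3 | h4
        · have := hY h3
          simp only [Finset.mem_sdiff, Finset.mem_insert] at this
          exact absurd hx1 (by tauto)
        · exact h4
    have := Finset.card_le_card hsub
    omega
  · intro h K hK
    have := h K hK
    push_neg at this
    obtain ⟨i, hfK, hcard⟩ := this
    refine ⟨i, K \ insert (f i) (X i), X i ∩ K, ?_, Finset.inter_subset_left, by omega, ?_⟩
    · intro x hx
      simp only [Finset.mem_sdiff] at hx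
      simp [hx.2]
    · ext x
      simp only [Finset.mem_insert, Finset.mem_union, Finset.mem_sdiff,
        Finset.mem_inter, Finset.mem_insert]
      constructor
      · intro hx
        by_cases hxf : x = f i
        · exact Or.inl hxf
        · by_cases hxX : x ∈ X i
          · exact Or.inr (Or.inr ⟨hxX, hx⟩)
          · exact Or.inr (Or.inl ⟨hx, by tauto⟩)
      · rintro (rfl | ⟨h1, _⟩ | ⟨_, h2⟩)
        · exact hfK
        · exact h1
        · exact h2
end

section
/- For the (δ_s, G)-ICSIE over F_q: the family Φ = { B ⊆ [n] nonempty : |X_i ∩ B| ≥ 2δ_s+1 for all i with f(i) ∈ B } is empty if and only if the optimal codelength N_opt^q(δ_s, G) equals n. -/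
/-!
If `Φ = ∅`, every nonzero `z` lies in `I(q, G, δs)`: take `B` to be the support of `z`.
A code must then have injective `z ↦ zG`, which forces `N ≥ n`, while the identity matrix
gives `N = n`. Conversely, for `b ∈ B ∈ Φ` the `n - 1` columns `e_j - [j ∈ B] e_b` (`j ≠ b`)
have as common left kernel the multiples of the indicator vector of `B`. A nonzero such
vector has support exactly `B`, and `B ∈ Φ` says precisely that it is not in
`I(q, G, δs)`, so these columns form a code of length `n - 1`.
-/

open Finset Matrix

theorem Matrix.exists_ne_zero_vecMul_eq_zero_of_card_lt {K ι κ : Type*} [Field K]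
    [Fintype ι] [Fintype κ] (G : Matrix ι κ K) (h : Fintype.card κ < Fintype.card ι) :
    ∃ z ≠ 0, z ᵥ* G = 0 := by
  have hker := (vecMulLinear G).ker_ne_bot_of_finrank_lt (by simpa using h)
  obtain ⟨z, hz, hne⟩ := Submodule.exists_mem_ne_zero_of_ne_bot hker
  exact ⟨z, hne, hz⟩

namespace ICSIE

variable {F ι σ κ : Type*} [Field F]

def indicatorKernelMatrix {k : ℕ} (B : Finset (Fin (k + 1))) (b : Fin (k + 1)) :
    Matrix (Fin (k + 1)) (Fin k) F :=
  of fun j l => (if j = b.succAbove l then 1 else 0) - if b.succAbove l ∈ B ∧ j = b then 1 else 0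

theorem vecMul_indicatorKernelMatrix_apply {k : ℕ} (B : Finset (Fin (k + 1))) (b : Fin (k + 1))
    (z : Fin (k + 1) → F) (l : Fin k) :
    (z ᵥ* indicatorKernelMatrix B b) l =
      z (b.succAbove l) - if b.succAbove l ∈ B then z b else 0 := by
  simp [indicatorKernelMatrix, vecMul, dotProduct, mul_sub, Finset.sum_sub_distrib, ite_and]

theorem eq_ite_mem_of_vecMul_indicatorKernelMatrix_eq_zero {k : ℕ} {B : Finset (Fin (k + 1))}
    {b : Fin (k + 1)} (hb : b ∈ B) {z : Fin (k + 1) → F} (hz : z ᵥ* indicatorKernelMatrix B b = 0)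
    (j : Fin (k + 1)) : z j = if j ∈ B then z b else 0 := by
  rcases eq_or_ne j b with rfl | hj
  · simp [hb]
  · obtain ⟨l, rfl⟩ := Fin.exists_succAbove_eq hj
    simpa [vecMul_indicatorKernelMatrix_apply, sub_eq_zero] using congrFun hz l

variable [DecidableEq F]

/-- The set `I(q, G, δs)`; here `σ` indexes the receivers `i`. -/
def errorSet (δs : ℕ) (X : σ → Finset ι) (f : σ → ι) : Set (ι → F) :=
  {z | ∃ i, z (f i) ≠ 0 ∧ ((X i).filter (fun j => z j ≠ 0)).card ≤ 2 * δs}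

def IsCode [Fintype ι] (δs : ℕ) (X : σ → Finset ι) (f : σ → ι) (G : Matrix ι κ F) : Prop :=
  ∀ z ∈ errorSet δs X f, z ᵥ* G ≠ 0

variable (F) in
def codeLengths {n : ℕ} (δs : ℕ) (X : σ → Finset (Fin n)) (f : σ → Fin n) : Set ℕ :=
  {N | ∃ G : Matrix (Fin n) (Fin N) F, IsCode δs X f G}

variable {δs : ℕ} {X : σ → Finset ι} {f : σ → ι}

theorem mem_errorSet_iff [Fintype ι] [DecidableEq ι] {z : ι → F} :
    z ∈ errorSet δs X f ↔
      ∃ i, f i ∈ univ.filter (fun j => z j ≠ 0) ∧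
        (X i ∩ univ.filter (fun j => z j ≠ 0)).card ≤ 2 * δs := by
  simp only [errorSet, Set.mem_ofPred_eq, mem_filter, mem_univ, true_and, ← filter_mem_eq_inter]

theorem isCode_one [Fintype ι] [DecidableEq ι] : IsCode δs X f (1 : Matrix ι ι F) := by
  rintro z ⟨i, hz, -⟩ hzero
  rw [vecMul_one] at hzero
  exact hz (congrFun hzero (f i))

theorem card_le_of_isCode [Fintype ι] [DecidableEq ι] [Fintype κ]
    (hΦ : ∀ B : Finset ι, B.Nonempty → ∃ i, f i ∈ B ∧ (X i ∩ B).card < 2 * δs + 1)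
    {G : Matrix ι κ F} (hG : IsCode δs X f G) : Fintype.card ι ≤ Fintype.card κ := by
  by_contra! hlt
  obtain ⟨z, hz, hzG⟩ := G.exists_ne_zero_vecMul_eq_zero_of_card_lt hlt
  obtain ⟨j, hj⟩ := Function.ne_iff.mp hz
  obtain ⟨i, hi, hcard⟩ := hΦ (univ.filter fun j => z j ≠ 0) ⟨j, by simpa using hj⟩
  exact hG z (mem_errorSet_iff.mpr ⟨i, hi, by omega⟩) hzG

theorem isCode_indicatorKernelMatrix {k : ℕ} {X : σ → Finset (Fin (k + 1))} {f : σ → Fin (k + 1)}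
    {B : Finset (Fin (k + 1))} {b : Fin (k + 1)} (hb : b ∈ B)
    (hB : ∀ i, f i ∈ B → 2 * δs + 1 ≤ (X i ∩ B).card) :
    IsCode δs X f (indicatorKernelMatrix (F := F) B b) := by
  intro z hzI hzero
  have hz := eq_ite_mem_of_vecMul_indicatorKernelMatrix_eq_zero hb hzero
  obtain ⟨i, hi, hcard⟩ := mem_errorSet_iff.mp hzI
  have hzb : z b ≠ 0 := by
    intro hzb
    have hfi := (mem_filter.mp hi).2
    rw [hz (f i), hzb, ite_self] at hfi
    exact hfi rfl
  have hsupp : univ.filter (fun j => z j ≠ 0) = B := by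
    ext j
    by_cases hj : j ∈ B <;> simp [hz j, hj, hzb]
  rw [hsupp] at hi hcard
  have := hB i hi
  omega

end ICSIE

open ICSIE in
theorem stmt7_general {F : Type} [Field F] [DecidableEq F]
    {n m : ℕ} (δs : ℕ)
    (X : Fin m → Finset (Fin n)) (f : Fin m → Fin n) :
    (∀ B : Finset (Fin n), B.Nonempty →
      ∃ i : Fin m, f i ∈ B ∧ ((X i) ∩ B).card < 2 * δs + 1) ↔
    sInf {N : ℕ | ∃ G : Matrix (Fin n) (Fin N) F,
        ∀ z : Fin n → F,
          (∃ i : Fin m, z (f i) ≠ 0 ∧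
            ((X i).filter (fun j => z j ≠ 0)).card ≤ 2 * δs) →
          Matrix.vecMul z G ≠ 0} = n := by
  change _ ↔ sInf (codeLengths F δs X f) = n
  have hn : n ∈ codeLengths F δs X f := ⟨1, isCode_one⟩
  constructor
  · intro hΦ
    refine le_antisymm (csInf_le (OrderBot.bddBelow _) hn) (le_csInf ⟨n, hn⟩ ?_)
    rintro N ⟨G, hG⟩
    simpa using card_le_of_isCode hΦ hG
  · intro hopt
    by_contra! hΦ
    obtain ⟨B, ⟨b, hb⟩, hB⟩ := hΦ
    obtain ⟨k, rfl⟩ : ∃ k, n = k + 1 := ⟨n - 1, by have := b.pos; omega⟩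
    have hk : k ∈ codeLengths F δs X f := ⟨_, isCode_indicatorKernelMatrix hb hB⟩
    have := csInf_le (OrderBot.bddBelow _) hk
    omega

/-- `Φ = ∅` iff the optimal codelength of the `(δs, G)`-ICSIE
equals `n`. -/
theorem stmt7 {F : Type} [Field F] [DecidableEq F]
    {n m : ℕ} (δs : ℕ)
    (X : Fin m → Finset (Fin n)) (f : Fin m → Fin n)
    (hf : ∀ i, f i ∉ X i) :
    (∀ B : Finset (Fin n), B.Nonempty →
      ∃ i : Fin m, f i ∈ B ∧ ((X i) ∩ B).card < 2 * δs + 1) ↔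
    sInf {N : ℕ | ∃ G : Matrix (Fin n) (Fin N) F,
        ∀ z : Fin n → F,
          (∃ i : Fin m, z (f i) ≠ 0 ∧
            ((X i).filter (fun j => z j ≠ 0)).card ≤ 2 * δs) →
          Matrix.vecMul z G ≠ 0} = n :=
  stmt7_general δs X f
end

section
/- If B ⊆ [n] with |B| ≥ 2δ_s + 2 satisfies |X_i ∩ B| ≥ 2δ_s + 1 for every receiver i with f(i) ∈ B (i.e., B induces a δ_s-cycle), then the (|B|)×(|B|−1) 'consecutive-differences' matrix G' with rows G'_j = e_{j-1} + e_j (where e_0 := 0 and entries taken in F_q, and row 1 is e_1, row |B| is e_{|B|-1}) satisfies zG' ≠ 0 for every z ∈ F_q^{|B|} with wt(z) ≤ |B| − 1; in particular any |B|−1 rows of G' are linearly independent, so the packets of B can be encoded with |B| − 1 symbols while preserving ICSIE decodability within B. -/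
/-- If `B` induces a `δs`-cycle (`|B| ≥ 2δs + 2` and
`|X_i ∩ B| ≥ 2δs + 1` for every receiver wanting a packet of `B`), then the
consecutive-differences `|B| × (|B| - 1)` matrix `G'` satisfies `zG' ≠ 0` for
every nonzero `z` of weight at most `|B| - 1`; in particular any `|B| - 1`
rows of `G'` are linearly independent. -/
theorem stmt8 {F : Type} [Field F] [DecidableEq F]
    {n m : ℕ} (δs : ℕ)
    (X : Fin m → Finset (Fin n)) (f : Fin m → Fin n)
    (B : Finset (Fin n)) (hB : 2 * δs + 2 ≤ B.card)
    (hcyc : ∀ i : Fin m, f i ∈ B → 2 * δs + 1 ≤ ((X i) ∩ B).card)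
    (G' : Matrix (Fin B.card) (Fin (B.card - 1)) F)
    (hG' : ∀ j k, G' j k =
      if (k : ℕ) = (j : ℕ) ∨ (k : ℕ) + 1 = (j : ℕ) then 1 else 0) :
    (∀ z : Fin B.card → F, z ≠ 0 → hammingNorm z ≤ B.card - 1 →
      Matrix.vecMul z G' ≠ 0) ∧
    (∀ S : Finset (Fin B.card), S.card = B.card - 1 →
      LinearIndependent F (fun j : {x // x ∈ S} => G' j.1)) := by
  have hN2 : 2 ≤ B.card := le_trans (by omega) hB
  have key : ∀ (z : Fin B.card → F) (k : Fin (B.card - 1)),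
      Matrix.vecMul z G' k = z ⟨k, by omega⟩ + z ⟨(k : ℕ) + 1, by omega⟩ := by
    intro z k
    have hk1 : (k : ℕ) < B.card := by omega
    have hk2 : (k : ℕ) + 1 < B.card := by omega
    have hab : (⟨k, hk1⟩ : Fin B.card) ≠ ⟨(k : ℕ) + 1, hk2⟩ := by
      simp [Fin.ext_iff]
    have hvm : Matrix.vecMul z G' k = ∑ j : Fin B.card, z j * G' j k := by
      simp [Matrix.vecMul, dotProduct]
    rw [hvm]
    have hsplit : ∀ j : Fin B.card, z j * G' j k =
        (if j = ⟨k, hk1⟩ then z j else 0) + (if j = ⟨(k : ℕ) + 1, hk2⟩ then z j else 0) := by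
      intro j
      rw [hG']
      by_cases h1 : j = ⟨k, hk1⟩
      · subst h1; simp [hab]
      · by_cases h2 : j = ⟨(k : ℕ) + 1, hk2⟩
        · subst h2; simp [h1]
        · have hno : ¬((k : ℕ) = (j : ℕ) ∨ (k : ℕ) + 1 = (j : ℕ)) := by
            rintro (h | h)
            · exact h1 (Fin.ext h.symm)
            · exact h2 (Fin.ext h.symm)
          simp [hno, h1, h2]
    rw [Finset.sum_congr rfl fun j _ => hsplit j, Finset.sum_add_distrib]
    simp
  have part1 : ∀ z : Fin B.card → F, z ≠ 0 → hammingNorm z ≤ B.card - 1 →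
      Matrix.vecMul z G' ≠ 0 := by
    intro z hz hwt hzero
    have hrec : ∀ j : ℕ, ∀ hj : j < B.card,
        z ⟨j, hj⟩ = (-1 : F) ^ j * z ⟨0, by omega⟩ := by
      intro j
      induction j with
      | zero => intro hj; simp
      | succ j ih =>
        intro hj
        have hj' : j < B.card := by omega
        have hk : j < B.card - 1 := by omega
        have hkey := key z ⟨j, hk⟩
        rw [hzero] at hkey
        simp only [Pi.zero_apply] at hkey
        have hz1 : z ⟨j + 1, hj⟩ = - z ⟨j, hj'⟩ := by linear_combination hkey.symm
        rw [hz1, ih hj', pow_succ]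
        ring
    have hz0 : z ⟨0, by omega⟩ ≠ 0 := by
      intro h0
      apply hz
      funext j
      have h := hrec j j.isLt
      rw [Fin.eta] at h
      rw [h, h0, mul_zero]; rfl
    have hall : ∀ j : Fin B.card, z j ≠ 0 := by
      intro j
      have h := hrec j j.isLt
      rw [Fin.eta] at h
      rw [h]
      exact mul_ne_zero (pow_ne_zero _ (neg_ne_zero.mpr one_ne_zero)) hz0
    have hcard : hammingNorm z = B.card := by
      unfold hammingNorm
      rw [Finset.filter_true_of_mem (fun j _ => hall j)]
      simp
    omega
  refine ⟨part1, ?_⟩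
  intro S hS
  rw [Fintype.linearIndependent_iff]
  intro g hg
  classical
  set z : Fin B.card → F := fun j => if h : j ∈ S then g ⟨j, h⟩ else 0 with hzdef
  have hvm : Matrix.vecMul z G' = 0 := by
    funext k
    have h1 : Matrix.vecMul z G' k = ∑ j : Fin B.card, z j * G' j k := by
      simp [Matrix.vecMul, dotProduct]
    rw [h1]
    have h2 : (∑ i : {x // x ∈ S}, g i • G' i.1) k = 0 := by rw [hg]; rfl
    rw [Finset.sum_apply] at h2
    simp only [Pi.zero_apply]
    rw [show (0 : F) = ∑ i : {x // x ∈ S}, (g i • G' i.1) k from h2.symm]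
    rw [show (∑ j : Fin B.card, z j * G' j k) = ∑ j ∈ S, z j * G' j k from
      (Finset.sum_subset (Finset.subset_univ S)
        (fun j _ hj => by simp [hzdef, hj])).symm,
      ← Finset.sum_attach S fun j => z j * G' j k]
    apply Finset.sum_congr rfl
    intro i _
    simp [hzdef, i.2, smul_eq_mul]
  have hz0 : z = 0 := by
    by_contra hzne
    refine part1 z hzne ?_ hvm
    have hsub : ({j | z j ≠ 0} : Finset (Fin B.card)) ⊆ S := by
      intro j hj
      simp only [Finset.mem_filter] at hj
      by_contra hjS
      exact hj.2 (by simp [hzdef, hjS])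
    calc hammingNorm z ≤ S.card := Finset.card_le_card hsub
      _ = B.card - 1 := hS
  intro i
  have := congrFun hz0 i.1
  simpa [hzdef, i.2] using this
end

section
/- If β disjoint δ_s-cycles exist in G, then N_opt^q(δ_s, G) ≤ n − β; moreover, if there is a choice of one packet node from each of the β δ_s-cycles such that removing these β packet nodes (and all incident edges) leaves a δ_s-acyclic graph, then N_opt^q(δ_s, G) = n − β. -/
/-!
A nonzero vector that is constant on each of the disjoint cycles and vanishes elsewhere is never
confusable: if it is nonzero at the wanted packet `f i`, which lies in a cycle `B`, then it is
nonzero on all of `B`, so receiver `i` sees at least `|X i ∩ B| ≥ 2δs + 1` nonzero coordinates.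
These vectors form a `β`-dimensional space, and taking it as the kernel of the encoder gives a code
of length `n - β`. Conversely, an encoder of length `N < n - β` has a nonzero kernel vector
vanishing at the `β` chosen packets; its support is a nonempty set avoiding them, and acyclicity of
the remaining graph makes it confusable.
-/

open Finset Module

section IndexCode

variable {F : Type} [Field F] [DecidableEq F] {n m : ℕ}

/-- `z` is a difference of two message vectors that receiver `i` must tell apart
(`z (f i) ≠ 0`), although they differ in at most `2 δs` of its side-information packets. -/
def IsConfusable (X : Fin m → Finset (Fin n)) (f : Fin m → Fin n) (δs : ℕ) (z : Fin n → F) :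
    Prop :=
  ∃ i, z (f i) ≠ 0 ∧ ((X i).filter (fun j => z j ≠ 0)).card ≤ 2 * δs

variable (F) in
def codeLengths (X : Fin m → Finset (Fin n)) (f : Fin m → Fin n) (δs : ℕ) : Set ℕ :=
  {N | ∃ G : Matrix (Fin n) (Fin N) F, ∀ z : Fin n → F,
    IsConfusable X f δs z → Matrix.vecMul z G ≠ 0}

variable {X : Fin m → Finset (Fin n)} {f : Fin m → Fin n} {δs : ℕ}

theorem sub_finrank_mem_codeLengths (W : Submodule F (Fin n → F))
    (hW : ∀ z ∈ W, ¬ IsConfusable X f δs z) : n - finrank F W ∈ codeLengths F X f δs := by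
  have hrank : finrank F ((Fin n → F) ⧸ W) = finrank F (Fin (n - finrank F W) → F) := by
    have := W.finrank_quotient_add_finrank
    rw [finrank_fin_fun] at this ⊢
    omega
  let L := (LinearEquiv.ofFinrankEq _ _ hrank).toLinearMap ∘ₗ W.mkQ
  refine ⟨(LinearMap.toMatrix' L).transpose, fun z hz hLz => hW z ?_ hz⟩
  rw [Matrix.vecMul_transpose, LinearMap.toMatrix'_mulVec] at hLz
  simpa [L] using hLz

theorem finrank_le_of_mem_codeLengths (U : Submodule F (Fin n → F))
    (hU : ∀ z ∈ U, z ≠ 0 → IsConfusable X f δs z) {N : ℕ} (hN : N ∈ codeLengths F X f δs) :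
    finrank F U ≤ N := by
  obtain ⟨G, hG⟩ := hN
  have hinj : Function.Injective ((Matrix.vecMulLinear G).domRestrict U) := by
    rw [← LinearMap.ker_eq_bot, LinearMap.ker_eq_bot']
    intro z hz
    by_contra hz0
    exact hG z (hU z z.2 (by simpa using hz0)) hz
  simpa using LinearMap.finrank_le_finrank_of_injective hinj

end IndexCode

section Cycles

variable {F : Type} [Field F] {n m β : ℕ} {Bf : Fin β → Finset (Fin n)}
  {X : Fin m → Finset (Fin n)} {f : Fin m → Fin n} {δs : ℕ}

theorem Function.injective_of_pairwise_disjoint_of_mem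
    (hdisj : ∀ t t', t ≠ t' → Disjoint (Bf t) (Bf t')) {r : Fin β → Fin n}
    (hr : ∀ t, r t ∈ Bf t) : Function.Injective r := by
  intro t t' h
  by_contra htt'
  exact disjoint_left.mp (hdisj t t' htt') (hr t) (h ▸ hr t')

variable (F Bf) in
def blockwiseConst : (Fin β → F) →ₗ[F] (Fin n → F) :=
  Fintype.linearCombination F fun t s => if s ∈ Bf t then 1 else 0

theorem blockwiseConst_apply (w : Fin β → F) (s : Fin n) :
    blockwiseConst F Bf w s = ∑ t, if s ∈ Bf t then w t else 0 := by
  simp [blockwiseConst, Fintype.linearCombination_apply, Finset.sum_apply]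

theorem blockwiseConst_apply_of_mem (hdisj : ∀ t t', t ≠ t' → Disjoint (Bf t) (Bf t'))
    (w : Fin β → F) {s : Fin n} {t : Fin β} (hs : s ∈ Bf t) : blockwiseConst F Bf w s = w t := by
  rw [blockwiseConst_apply, Finset.sum_eq_single t, if_pos hs]
  · exact fun t' _ ht' => if_neg fun hs' => disjoint_left.mp (hdisj t' t ht') hs' hs
  · exact fun h => (h (mem_univ t)).elim

theorem blockwiseConst_apply_of_forall_notMem (w : Fin β → F) {s : Fin n}
    (hs : ∀ t, s ∉ Bf t) : blockwiseConst F Bf w s = 0 := by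
  simp [blockwiseConst_apply, hs]

theorem blockwiseConst_injective (hdisj : ∀ t t', t ≠ t' → Disjoint (Bf t) (Bf t'))
    (hne : ∀ t, (Bf t).Nonempty) : Function.Injective (blockwiseConst F Bf) := by
  choose r hr using hne
  intro w w' h
  funext t
  rw [← blockwiseConst_apply_of_mem hdisj w (hr t), ← blockwiseConst_apply_of_mem hdisj w' (hr t),
    h]

theorem not_isConfusable_blockwiseConst [DecidableEq F]
    (hdisj : ∀ t t', t ≠ t' → Disjoint (Bf t) (Bf t'))
    (hcyc : ∀ t, ∀ i : Fin m, f i ∈ Bf t → 2 * δs + 1 ≤ ((X i) ∩ Bf t).card) (w : Fin β → F) :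
    ¬ IsConfusable X f δs (blockwiseConst F Bf w) := by
  rintro ⟨i, hfi, hcard⟩
  obtain ⟨t, ht⟩ : ∃ t, f i ∈ Bf t := by
    by_contra! h
    exact hfi (blockwiseConst_apply_of_forall_notMem w h)
  rw [blockwiseConst_apply_of_mem hdisj w ht] at hfi
  have hsub : X i ∩ Bf t ⊆ (X i).filter (fun j => blockwiseConst F Bf w j ≠ 0) := by
    intro b hb
    rw [mem_inter] at hb
    rw [mem_filter, blockwiseConst_apply_of_mem hdisj w hb.2]
    exact ⟨hb.1, hfi⟩
  have := (hcyc t i ht).trans (card_le_card hsub)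
  omega

theorem finrank_ker_funLeft {r : Fin β → Fin n} (hr : Function.Injective r) :
    finrank F (LinearMap.funLeft F F r).ker = n - β := by
  have := (LinearMap.funLeft F F r).finrank_range_add_finrank_ker
  rw [LinearMap.range_eq_top.mpr (LinearMap.funLeft_surjective_of_injective F F r hr),
    finrank_top, finrank_fin_fun, finrank_fin_fun] at this
  omega

theorem isConfusable_of_mem_ker_funLeft [DecidableEq F] {r : Fin β → Fin n}
    (hacyc : ∀ B' : Finset (Fin n), (∀ t, r t ∉ B') → B'.Nonempty →
      ∃ i : Fin m, f i ∈ B' ∧ ((X i) ∩ B').card < 2 * δs + 1)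
    {z : Fin n → F} (hz : z ∈ (LinearMap.funLeft F F r).ker) (hz0 : z ≠ 0) :
    IsConfusable X f δs z := by
  have hzr : ∀ t, z (r t) = 0 := fun t => congr_fun hz t
  obtain ⟨j, hj⟩ := Function.ne_iff.mp hz0
  obtain ⟨i, hfi, hcard⟩ := hacyc (univ.filter fun j => z j ≠ 0)
    (fun t ht => (mem_filter.mp ht).2 (hzr t)) ⟨j, mem_filter.mpr ⟨mem_univ j, hj⟩⟩
  refine ⟨i, (mem_filter.mp hfi).2, ?_⟩
  rw [inter_filter, inter_univ] at hcard
  omega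

theorem tsub_mem_codeLengths [DecidableEq F] (hne : ∀ t, (Bf t).Nonempty)
    (hdisj : ∀ t t', t ≠ t' → Disjoint (Bf t) (Bf t'))
    (hcyc : ∀ t, ∀ i : Fin m, f i ∈ Bf t → 2 * δs + 1 ≤ ((X i) ∩ Bf t).card) :
    n - β ∈ codeLengths F X f δs := by
  have hrank := LinearMap.finrank_range_of_inj (blockwiseConst_injective (F := F) hdisj hne)
  rw [finrank_fin_fun] at hrank
  rw [← hrank]
  exact sub_finrank_mem_codeLengths _ fun _ ⟨w, hw⟩ =>
    hw ▸ not_isConfusable_blockwiseConst hdisj hcyc w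

theorem tsub_le_of_mem_codeLengths [DecidableEq F]
    (hdisj : ∀ t t', t ≠ t' → Disjoint (Bf t) (Bf t'))
    {r : Fin β → Fin n} (hr : ∀ t, r t ∈ Bf t)
    (hacyc : ∀ B' : Finset (Fin n), (∀ t, r t ∉ B') → B'.Nonempty →
      ∃ i : Fin m, f i ∈ B' ∧ ((X i) ∩ B').card < 2 * δs + 1)
    {N : ℕ} (hN : N ∈ codeLengths F X f δs) : n - β ≤ N := by
  rw [← finrank_ker_funLeft (F := F) (Function.injective_of_pairwise_disjoint_of_mem hdisj hr)]
  exact finrank_le_of_mem_codeLengths _ (fun _ => isConfusable_of_mem_ker_funLeft hacyc) hN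

end Cycles

theorem stmt9_general {F : Type} [Field F] [DecidableEq F]
    {n m : ℕ} (δs β : ℕ)
    (X : Fin m → Finset (Fin n)) (f : Fin m → Fin n)
    (Bf : Fin β → Finset (Fin n))
    (hne : ∀ t, (Bf t).Nonempty)
    (hdisj : ∀ t t', t ≠ t' → Disjoint (Bf t) (Bf t'))
    (hcyc : ∀ t, ∀ i : Fin m, f i ∈ Bf t → 2 * δs + 1 ≤ ((X i) ∩ Bf t).card) :
    sInf {N : ℕ | ∃ G : Matrix (Fin n) (Fin N) F,
        ∀ z : Fin n → F,
          (∃ i : Fin m, z (f i) ≠ 0 ∧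
            ((X i).filter (fun j => z j ≠ 0)).card ≤ 2 * δs) →
          Matrix.vecMul z G ≠ 0} ≤ n - β ∧
    (∀ r : Fin β → Fin n, (∀ t, r t ∈ Bf t) →
      (∀ B' : Finset (Fin n), (∀ t, r t ∉ B') → B'.Nonempty →
        ∃ i : Fin m, f i ∈ B' ∧ ((X i) ∩ B').card < 2 * δs + 1) →
      sInf {N : ℕ | ∃ G : Matrix (Fin n) (Fin N) F,
        ∀ z : Fin n → F,
          (∃ i : Fin m, z (f i) ≠ 0 ∧
            ((X i).filter (fun j => z j ≠ 0)).card ≤ 2 * δs) →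
          Matrix.vecMul z G ≠ 0} = n - β) := by
  have hmem := tsub_mem_codeLengths (F := F) hne hdisj hcyc
  exact ⟨Nat.sInf_le hmem, fun r hr hacyc => le_antisymm (Nat.sInf_le hmem)
    (le_csInf ⟨_, hmem⟩ fun _ => tsub_le_of_mem_codeLengths hdisj hr hacyc)⟩

/-- If `β` disjoint `δs`-cycles exist, then
`N_opt ≤ n - β`; moreover, if removing one packet node from each cycle leaves
a `δs`-acyclic graph, then `N_opt = n - β`. -/
theorem stmt9 {F : Type} [Field F] [DecidableEq F]
    {n m : ℕ} (δs β : ℕ)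
    (X : Fin m → Finset (Fin n)) (f : Fin m → Fin n)
    (hf : ∀ i, f i ∉ X i)
    (Bf : Fin β → Finset (Fin n))
    (hne : ∀ t, (Bf t).Nonempty)
    (hdisj : ∀ t t', t ≠ t' → Disjoint (Bf t) (Bf t'))
    (hcyc : ∀ t, ∀ i : Fin m, f i ∈ Bf t → 2 * δs + 1 ≤ ((X i) ∩ Bf t).card) :
    sInf {N : ℕ | ∃ G : Matrix (Fin n) (Fin N) F,
        ∀ z : Fin n → F,
          (∃ i : Fin m, z (f i) ≠ 0 ∧
            ((X i).filter (fun j => z j ≠ 0)).card ≤ 2 * δs) →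
          Matrix.vecMul z G ≠ 0} ≤ n - β ∧
    (∀ r : Fin β → Fin n, (∀ t, r t ∈ Bf t) →
      (∀ B' : Finset (Fin n), (∀ t, r t ∉ B') → B'.Nonempty →
        ∃ i : Fin m, f i ∈ B' ∧ ((X i) ∩ B').card < 2 * δs + 1) →
      sInf {N : ℕ | ∃ G : Matrix (Fin n) (Fin N) F,
        ∀ z : Fin n → F,
          (∃ i : Fin m, z (f i) ≠ 0 ∧
            ((X i).filter (fun j => z j ≠ 0)).card ≤ 2 * δs) →
          Matrix.vecMul z G ≠ 0} = n - β) :=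
  stmt9_general δs β X f Bf hne hdisj hcyc
end

section
/- For the clique side information graph of size n (m = n, f(i) = i, X_i = [n]\{i}), the optimal codelength of the (δ_s, G)-ICSIE over F_q equals the minimum dimension N such that there exist n vectors in F_q^N with the property that any 2δ_s + 1 of them are linearly independent. -/
/-- For the clique of size `n`, the optimal ICSIE codelength
equals the minimum dimension `N` admitting `n` vectors in `F^N` any
`2δs + 1` of which are linearly independent. -/
theorem stmt10 {F : Type} [Field F] [DecidableEq F] (n δs : ℕ) :
    sInf {N : ℕ | ∃ G : Matrix (Fin n) (Fin N) F,
        ∀ z : Fin n → F,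
          (∃ i : Fin n, z i ≠ 0 ∧
            ((Finset.univ.erase i).filter (fun j => z j ≠ 0)).card ≤ 2 * δs) →
          Matrix.vecMul z G ≠ 0} =
      sInf {N : ℕ | ∃ v : Fin n → (Fin N → F),
        ∀ S : Finset (Fin n), S.card ≤ 2 * δs + 1 →
          LinearIndependent F (fun j : {x // x ∈ S} => v j.1)} := by
  congr 1
  ext N
  simp only [Set.mem_setOf_eq]
  constructor
  · rintro ⟨G, hG⟩
    refine ⟨fun i => G i, ?_⟩
    intro S hS
    rw [Fintype.linearIndependent_iff]
    intro c hc
    by_contra h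
    push_neg at h
    obtain ⟨⟨i, hiS⟩, hci⟩ := h
    set z : Fin n → F := fun j => if h : j ∈ S then c ⟨j, h⟩ else 0 with hz
    have hzi : z i ≠ 0 := by simp [hz, hiS, hci]
    have hsupp : ∀ j, z j ≠ 0 → j ∈ S := by
      intro j hj
      by_contra hjS
      simp [hz, hjS] at hj
    have hcard : ((Finset.univ.erase i).filter (fun j => z j ≠ 0)).card ≤ 2 * δs := by
      have h1 : ((Finset.univ.erase i).filter (fun j => z j ≠ 0)) ⊆ S.erase i := by
        intro j hj
        simp only [Finset.mem_filter, Finset.mem_erase, Finset.mem_univ] at hj ⊢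
        exact ⟨hj.1.1, hsupp j hj.2⟩
      have := Finset.card_le_card h1
      rw [Finset.card_erase_of_mem hiS] at this
      omega
    apply hG z ⟨i, hzi, hcard⟩
    funext k
    have h0 : Matrix.vecMul z G k = ∑ j : Fin n, z j * G j k := by
      simp [Matrix.vecMul, dotProduct]
    have h1 : ∑ j : Fin n, z j * G j k = ∑ j ∈ S, z j * G j k := by
      refine (Finset.sum_subset (Finset.subset_univ S) ?_).symm
      intro j _ hjS
      simp [hz, hjS]
    have h2 : ∑ j ∈ S, z j * G j k = ∑ j : {x // x ∈ S}, c j * G j.1 k := by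
      rw [← Finset.sum_attach S (fun j => z j * G j k)]
      refine Finset.sum_congr rfl fun j _ => ?_
      simp [hz, j.2]
    have h3 := congrFun hc k
    rw [Finset.sum_apply] at h3
    simp only [Pi.smul_apply, smul_eq_mul] at h3
    simp only [Pi.zero_apply]
    rw [h0, h1, h2]
    simpa using h3
  · rintro ⟨v, hv⟩
    refine ⟨Matrix.of v, ?_⟩
    rintro z ⟨i, hzi, hcard⟩ hzero
    set S : Finset (Fin n) := Finset.univ.filter (fun j => z j ≠ 0) with hSdef
    have hiS : i ∈ S := by simp [hSdef, hzi]
    have hScard : S.card ≤ 2 * δs + 1 := by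
      have h1 : S ⊆ insert i ((Finset.univ.erase i).filter (fun j => z j ≠ 0)) := by
        intro j hj
        simp only [hSdef, Finset.mem_filter, Finset.mem_univ, true_and] at hj
        by_cases hji : j = i
        · simp [hji]
        · simp [Finset.mem_insert, Finset.mem_filter, Finset.mem_erase, hji, hj]
      have := Finset.card_le_card h1
      have := Finset.card_insert_le i ((Finset.univ.erase i).filter (fun j => z j ≠ 0))
      omega
    have hli := hv S hScard
    rw [Fintype.linearIndependent_iff] at hli
    have key : ∑ j : {x // x ∈ S}, z j.1 • v j.1 = 0 := by
      funext k
      rw [Finset.sum_apply]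
      simp only [Pi.smul_apply, smul_eq_mul, Pi.zero_apply]
      have h0 : Matrix.vecMul z (Matrix.of v) k = ∑ j : Fin n, z j * v j k := by
        simp [Matrix.vecMul, dotProduct]
      have h1 : ∑ j : Fin n, z j * v j k = ∑ j ∈ S, z j * v j k := by
        refine (Finset.sum_subset (Finset.subset_univ S) ?_).symm
        intro j _ hjS
        simp only [hSdef, Finset.mem_filter, Finset.mem_univ, true_and, not_not] at hjS
        simp [hjS]
      have h2 : ∑ j ∈ S, z j * v j k = ∑ j : {x // x ∈ S}, z j.1 * v j.1 k :=
        (Finset.sum_attach S (fun j => z j * v j k)).symm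
      have := congrFun hzero k
      rw [h0, h1, h2] at this
      simpa using this
    exact hzi (hli (fun j => z j.1) key ⟨i, hiS⟩)
end

section
/- Over F_2, for the clique of size n with δ_s = 1, the optimal ICSIE codelength is the minimum N satisfying 2^{N−1} ≥ n. In particular, the maximum number of vectors in F_2^N (N ≥ 3) any 3 of which are linearly independent equals 2^{N−1}, achieved by the set of all odd-weight vectors. -/
/-!
Over `𝔽₂` a family is linearly independent iff no nonempty subfamily sums to zero. Hence both
the code condition on the rows of `G` and the 3-wise independence of a set say that the vectors
are distinct and no three of them, repetitions allowed, sum to zero: they form a cap. A cap `S`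
is disjoint from its translate `a + S` for `a ∈ S`, so `2 |S| ≤ |V|`. Conversely, for a nonzero
functional `φ` the affine hyperplane `{φ = 1}` has `|V| / 2` elements and is a cap because
`φ (a + b + c) = 1`; for `φ` the coordinate sum it is the set of odd-weight vectors.
-/

open Finset

section CharTwo

variable {V ι : Type*} [AddCommGroup V]

/-- Repetitions are allowed: `a = b` gives `c ≠ 0`, and `a + b = 0` already forces `a = b`,
so a cap is a set any at most three distinct elements of which are linearly independent. -/
def IsCap (S : Set V) : Prop :=
  ∀ a ∈ S, ∀ b ∈ S, ∀ c ∈ S, a + b + c ≠ 0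

theorem IsCap.mono {S T : Set V} (hST : T ⊆ S) (hS : IsCap S) : IsCap T :=
  fun a ha b hb c hc => hS a (hST ha) b (hST hb) c (hST hc)

variable [Module (ZMod 2) V]

theorem sum_smul_eq_sum_filter_ne_zero (s : Finset ι) (c : ι → ZMod 2) (v : ι → V) :
    ∑ i ∈ s, c i • v i = ∑ i ∈ s with c i ≠ 0, v i := by
  rw [sum_filter]
  refine sum_congr rfl fun i _ => ?_
  rcases (by decide : ∀ a : ZMod 2, a = 0 ∨ a = 1) (c i) with h | h <;> simp [h]

theorem linearIndependent_iff_sum_ne_zero {r : ι → V} :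
    LinearIndependent (ZMod 2) r ↔ ∀ I : Finset ι, I.Nonempty → ∑ i ∈ I, r i ≠ 0 := by
  classical
  rw [linearIndependent_iff']
  constructor
  · rintro h I ⟨i, hi⟩ hsum
    exact one_ne_zero (h I 1 (by simpa using hsum) i hi)
  · intro h s g hsum i hi
    by_contra hgi
    refine h (s.filter (g · ≠ 0)) ⟨i, mem_filter.2 ⟨hi, hgi⟩⟩ ?_
    rwa [← sum_smul_eq_sum_filter_ne_zero]

theorem forall_sum_ne_zero_iff_injective_and_isCap {r : ι → V} :
    (∀ I : Finset ι, I.Nonempty → #I ≤ 3 → ∑ i ∈ I, r i ≠ 0) ↔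
      Function.Injective r ∧ IsCap (Set.range r) := by
  classical
  constructor
  · intro h
    have hsingle : ∀ i, r i ≠ 0 := fun i => by simpa using h {i} (by simp) (by simp)
    refine ⟨fun i j hij => by_contra fun hne => ?_, ?_⟩
    · refine h {i, j} (by simp) (card_le_two.trans (by norm_num)) ?_
      rw [sum_pair hne, hij, ZModModule.add_self]
    rintro _ ⟨i, rfl⟩ _ ⟨j, rfl⟩ _ ⟨k, rfl⟩ hsum
    by_cases hij : i = j
    · subst hij
      rw [ZModModule.add_self, zero_add] at hsum
      exact hsingle k hsum
    by_cases hik : i = k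
    · subst hik
      rw [add_right_comm, ZModModule.add_self, zero_add] at hsum
      exact hsingle j hsum
    by_cases hjk : j = k
    · subst hjk
      rw [add_assoc, ZModModule.add_self, add_zero] at hsum
      exact hsingle i hsum
    refine h {i, j, k} (by simp) card_le_three ?_
    rwa [sum_insert (by simp [hij, hik]), sum_pair hjk, ← add_assoc]
  · rintro ⟨hinj, hcap⟩ I hI hcard
    have hpos := hI.card_pos
    interval_cases hI3 : #I
    · obtain ⟨i, rfl⟩ := card_eq_one.1 hI3
      simpa [add_assoc, ZModModule.add_self] using hcap _ ⟨i, rfl⟩ _ ⟨i, rfl⟩ _ ⟨i, rfl⟩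
    · obtain ⟨i, j, hne, rfl⟩ := card_eq_two.1 hI3
      rw [sum_pair hne, ← ZModModule.sub_eq_add, sub_ne_zero]
      exact hinj.ne hne
    · obtain ⟨i, j, k, hij, hik, hjk, rfl⟩ := card_eq_three.1 hI3
      rw [sum_insert (by simp [hij, hik]), sum_pair hjk, ← add_assoc]
      exact hcap _ ⟨i, rfl⟩ _ ⟨j, rfl⟩ _ ⟨k, rfl⟩

theorem forall_linearIndependent_of_card_le_three_iff_isCap {S : Finset V} :
    (∀ T ⊆ S, #T ≤ 3 → LinearIndependent (ZMod 2) (fun v : {x // x ∈ T} => v.1)) ↔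
      IsCap (S : Set V) := by
  have hsmall : ∀ T : Finset V, #T ≤ 3 →
      (LinearIndependent (ZMod 2) (fun v : {x // x ∈ T} => v.1) ↔ IsCap (T : Set V)) := by
    intro T hT
    have hrange : Set.range (fun v : {x // x ∈ T} => v.1) = T := Subtype.range_coe_subtype
    have hiff := forall_sum_ne_zero_iff_injective_and_isCap.trans
      (and_iff_right (Subtype.val_injective (p := (· ∈ T))))
    rw [hrange] at hiff
    rw [linearIndependent_iff_sum_ne_zero, ← hiff]
    exact forall₂_congr fun I _ =>
      ⟨fun h _ => h, fun h => h ((card_le_univ I).trans (by simpa using hT))⟩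
  constructor
  · intro h a ha b hb c hc
    classical
    have habc : ({a, b, c} : Finset V) ⊆ S := by simpa [insert_subset_iff] using ⟨ha, hb, hc⟩
    exact (hsmall _ card_le_three).1 (h _ habc card_le_three) a (by simp) b (by simp) c (by simp)
  · intro hS T hTS hT
    exact (hsmall T hT).2 (hS.mono (coe_subset.2 hTS))

theorem two_mul_card_le_of_isCap_range [Fintype ι] [Fintype V] {r : ι → V}
    (hr : Function.Injective r) (hcap : IsCap (Set.range r)) :
    2 * Fintype.card ι ≤ Fintype.card V := by
  rcases isEmpty_or_nonempty ι with _ | ⟨⟨i₀⟩⟩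
  · simp
  have hdisj : ∀ i j, r i ≠ r i₀ + r j := fun i j h =>
    hcap _ ⟨i₀, rfl⟩ _ ⟨j, rfl⟩ _ ⟨i, rfl⟩ (by rw [h, ZModModule.add_self])
  have hinj := hr.sumElim ((add_right_injective (r i₀)).comp hr) hdisj
  simpa [two_mul] using Fintype.card_le_of_injective _ hinj

theorem IsCap.two_mul_card_le [Fintype V] {S : Finset V} (hS : IsCap (S : Set V)) :
    2 * #S ≤ Fintype.card V := by
  have hrange : Set.range (fun v : {x // x ∈ S} => v.1) = S := Subtype.range_coe_subtype
  have h := two_mul_card_le_of_isCap_range Subtype.val_injective (hrange ▸ hS)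
  rwa [Fintype.card_coe] at h

theorem isCap_setOf_eq_one (φ : V →ₗ[ZMod 2] ZMod 2) : IsCap {v | φ v = 1} := by
  intro a ha b hb c hc h
  have := congrArg φ h
  rw [map_add, map_add, map_zero, (ha : φ a = 1), (hb : φ b = 1), (hc : φ c = 1)] at this
  exact absurd this (by decide)

theorem two_mul_card_filter_eq_one [Fintype V] (φ : V →ₗ[ZMod 2] ZMod 2) {e : V}
    (he : φ e = 1) : 2 * #{v | φ v = 1} = Fintype.card V := by
  have hinv : ∀ v : V, v + e + e = v := fun v => by rw [add_assoc, ZModModule.add_self, add_zero]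
  have hcard : #{v | φ v = 1} = #{v | ¬φ v = 1} := by
    refine card_nbij' (· + e) (· + e) (fun v hv => ?_) (fun v hv => ?_)
      (fun v _ => hinv v) (fun v _ => hinv v)
    · simp_all
    · have h01 : ∀ a : ZMod 2, a ≠ 1 → a = 0 := by decide
      simp_all
  rw [two_mul]
  nth_rw 2 [hcard]
  rw [card_filter_add_card_filter_not, card_univ]

theorem exists_injective_isCap_of_two_mul_card_le [Fintype ι] [Fintype V] [Nontrivial V]
    (h : 2 * Fintype.card ι ≤ Fintype.card V) :
    ∃ r : ι → V, Function.Injective r ∧ IsCap (Set.range r) := by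
  obtain ⟨e, he⟩ := exists_ne (0 : V)
  obtain ⟨φ, hφ⟩ := Module.Projective.exists_dual_eq_one (ZMod 2) he
  have hcard : Fintype.card ι ≤ Fintype.card {v // φ v = 1} := by
    have := two_mul_card_filter_eq_one φ hφ
    rw [Fintype.card_subtype]
    omega
  obtain ⟨f⟩ := Function.Embedding.nonempty_of_card_le hcard
  refine ⟨fun i => (f i).1, Subtype.val_injective.comp f.injective,
    (isCap_setOf_eq_one φ).mono ?_⟩
  rintro _ ⟨i, rfl⟩
  exact (f i).2

end CharTwo

theorem two_mul_le_two_pow_iff {k m : ℕ} (hm : 0 < m) : 2 * k ≤ 2 ^ m ↔ k ≤ 2 ^ (m - 1) := by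
  obtain ⟨j, rfl⟩ : ∃ j, m = j + 1 := ⟨m - 1, by omega⟩
  rw [pow_succ, Nat.add_sub_cancel]
  omega

section Parity

variable {ι : Type*} [Fintype ι]

def parity : (ι → ZMod 2) →ₗ[ZMod 2] ZMod 2 :=
  ∑ i, LinearMap.proj i

theorem parity_apply (v : ι → ZMod 2) : parity v = ∑ i, v i := by
  simp [parity]

theorem hammingNorm_mod_two_eq_one_iff (v : ι → ZMod 2) :
    hammingNorm v % 2 = 1 ↔ parity v = 1 := by
  have hcast : parity v = hammingNorm v := by
    simpa [parity_apply, hammingNorm] using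
      sum_smul_eq_sum_filter_ne_zero univ v (fun _ => (1 : ZMod 2))
  rw [hcast, ZMod.natCast_eq_one_iff_odd, Nat.odd_iff]

theorem card_filter_hammingNorm_mod_two_eq_one [DecidableEq ι] [Nonempty ι] :
    #{v : ι → ZMod 2 | hammingNorm v % 2 = 1} = 2 ^ (Fintype.card ι - 1) := by
  obtain ⟨i⟩ := ‹Nonempty ι›
  have h := two_mul_card_filter_eq_one parity (e := Pi.single i 1) (by simp [parity_apply])
  simp_rw [← hammingNorm_mod_two_eq_one_iff] at h
  rw [Fintype.card_fun, ZMod.card] at h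
  obtain ⟨k, hk⟩ := Nat.exists_eq_succ_of_ne_zero (Fintype.card_ne_zero (α := ι))
  rw [hk, pow_succ'] at h
  rw [hk, Nat.succ_sub_one]
  omega

theorem isCap_filter_hammingNorm_mod_two_eq_one [DecidableEq ι] :
    IsCap (({v : ι → ZMod 2 | hammingNorm v % 2 = 1} : Finset _) : Set (ι → ZMod 2)) :=
  (isCap_setOf_eq_one parity).mono fun v hv => by
    simpa [hammingNorm_mod_two_eq_one_iff] using hv

end Parity

section Clique

variable {ι κ : Type*} [Fintype ι]

theorem vecMul_eq_sum_filter_ne_zero (z : ι → ZMod 2) (G : Matrix ι κ (ZMod 2)) :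
    Matrix.vecMul z G = ∑ i with z i ≠ 0, G i := by
  rw [Matrix.vecMul_eq_sum]
  exact sum_smul_eq_sum_filter_ne_zero _ _ _

variable [DecidableEq ι]

theorem exists_ne_zero_card_erase_le_two_iff (z : ι → ZMod 2) :
    (∃ i, z i ≠ 0 ∧ #((univ.erase i).filter (fun j => z j ≠ 0)) ≤ 2) ↔
      ({i | z i ≠ 0} : Finset ι).Nonempty ∧ #{i | z i ≠ 0} ≤ 3 := by
  simp only [filter_erase]
  constructor
  · rintro ⟨i, hi, hcard⟩
    have hmem : i ∈ ({i | z i ≠ 0} : Finset ι) := by simpa using hi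
    rw [card_erase_of_mem hmem] at hcard
    exact ⟨⟨i, hmem⟩, by omega⟩
  · rintro ⟨⟨i, hmem⟩, hcard⟩
    refine ⟨i, (mem_filter.1 hmem).2, ?_⟩
    rw [card_erase_of_mem hmem]
    omega

theorem forall_vecMul_ne_zero_iff (G : Matrix ι κ (ZMod 2)) :
    (∀ z : ι → ZMod 2, (∃ i, z i ≠ 0 ∧ #((univ.erase i).filter (fun j => z j ≠ 0)) ≤ 2) →
        Matrix.vecMul z G ≠ 0) ↔
      ∀ I : Finset ι, I.Nonempty → #I ≤ 3 → ∑ i ∈ I, G i ≠ 0 := by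
  simp only [exists_ne_zero_card_erase_le_two_iff, vecMul_eq_sum_filter_ne_zero]
  constructor
  · intro h I
    have hsupp : ({i | (if i ∈ I then 1 else 0 : ZMod 2) ≠ 0} : Finset ι) = I := by
      ext i
      by_cases hi : i ∈ I <;> simp [hi]
    simpa [hsupp] using h (fun i => if i ∈ I then 1 else 0)
  · exact fun h z hz => h _ hz.1 hz.2

theorem exists_matrix_forall_vecMul_ne_zero_iff (hι : 2 ≤ Fintype.card ι) (N : ℕ) :
    (∃ G : Matrix ι (Fin N) (ZMod 2), ∀ z : ι → ZMod 2,
        (∃ i, z i ≠ 0 ∧ #((univ.erase i).filter (fun j => z j ≠ 0)) ≤ 2) →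
          Matrix.vecMul z G ≠ 0) ↔
      Fintype.card ι ≤ 2 ^ (N - 1) := by
  simp only [forall_vecMul_ne_zero_iff]
  have hcardV : Fintype.card (Fin N → ZMod 2) = 2 ^ N := by simp
  constructor
  · rintro ⟨G, hG⟩
    obtain ⟨hinj, hcap⟩ := forall_sum_ne_zero_iff_injective_and_isCap.1 hG
    have hle := hcardV ▸ two_mul_card_le_of_isCap_range hinj hcap
    have hN : 0 < N := Nat.pos_of_ne_zero fun hN => by simp [hN] at hle; omega
    exact (two_mul_le_two_pow_iff hN).1 hle
  · intro hle
    have hN : 0 < N := Nat.pos_of_ne_zero fun hN => by simp [hN] at hle; omega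
    have : Nonempty (Fin N) := ⟨⟨0, hN⟩⟩
    obtain ⟨r, hr⟩ := exists_injective_isCap_of_two_mul_card_le (ι := ι)
      (hcardV ▸ (two_mul_le_two_pow_iff hN).2 hle)
    exact ⟨Matrix.of r, forall_sum_ne_zero_iff_injective_and_isCap.2 hr⟩

end Clique

/-- Over `F_2`, for the clique of size `n` with `δs = 1`, the
optimal ICSIE codelength is the minimum `N` with `2^{N-1} ≥ n`. Moreover, the
maximum number of vectors in `F_2^N` (`N ≥ 3`) any 3 of which are linearly
independent equals `2^{N-1}`, achieved by the set of odd-weight vectors. -/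
theorem stmt12 (n : ℕ) (hn : 3 < n) (N : ℕ) (hN : 3 ≤ N) :
    sInf {N' : ℕ | ∃ G : Matrix (Fin n) (Fin N') (ZMod 2),
        ∀ z : Fin n → ZMod 2,
          (∃ i : Fin n, z i ≠ 0 ∧
            ((Finset.univ.erase i).filter (fun j => z j ≠ 0)).card ≤ 2) →
          Matrix.vecMul z G ≠ 0} = sInf {N' : ℕ | n ≤ 2 ^ (N' - 1)} ∧
    IsGreatest {k : ℕ | ∃ S : Finset (Fin N → ZMod 2), S.card = k ∧
        ∀ T ⊆ S, T.card ≤ 3 →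
          LinearIndependent (ZMod 2) (fun v : {x // x ∈ T} => v.1)}
      (2 ^ (N - 1)) ∧
    ((Finset.univ.filter
        (fun v : Fin N → ZMod 2 => hammingNorm v % 2 = 1)).card = 2 ^ (N - 1) ∧
      ∀ T ⊆ Finset.univ.filter
          (fun v : Fin N → ZMod 2 => hammingNorm v % 2 = 1),
        T.card ≤ 3 →
          LinearIndependent (ZMod 2) (fun v : {x // x ∈ T} => v.1)) := by
  have hN0 : 0 < N := by omega
  have : Nonempty (Fin N) := ⟨⟨0, hN0⟩⟩
  have hcard : #{v : Fin N → ZMod 2 | hammingNorm v % 2 = 1} = 2 ^ (N - 1) := by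
    simpa using card_filter_hammingNorm_mod_two_eq_one (ι := Fin N)
  have hli := forall_linearIndependent_of_card_le_three_iff_isCap.2
    (isCap_filter_hammingNorm_mod_two_eq_one (ι := Fin N))
  refine ⟨?_, ⟨⟨_, hcard, hli⟩, ?_⟩, hcard, hli⟩
  · have hn2 : 2 ≤ Fintype.card (Fin n) := by simp; omega
    simp_rw [exists_matrix_forall_vecMul_ne_zero_iff hn2, Fintype.card_fin]
  · rintro k ⟨S, rfl, hS⟩
    have hle := (forall_linearIndependent_of_card_le_three_iff_isCap.1 hS).two_mul_card_le
    rw [Fintype.card_fun, ZMod.card, Fintype.card_fin] at hle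
    exact (two_mul_le_two_pow_iff hN0).1 hle
end

section
/- Let H be the parity check matrix of an (n, k, d_min) linear error-correcting code over F_q with d_min ≥ 2δ_s + 2. Then the n×(n−k) matrix H^T is a valid generator matrix of the (δ_s, G)-ICSIE when G is the clique of size n. Consequently, for the clique, N_opt^q(δ_s, G) equals the minimum of n − k over all (n, k, d_min) linear codes with d_min ≥ 2δ_s + 2. -/
/-- The key equivalence between the ICSIE condition and the weight bound. -/
lemma aux_equiv {F : Type} [Field F] [DecidableEq F] {n δs : ℕ} (z : Fin n → F) :
    (∃ i : Fin n, z i ≠ 0 ∧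
      ((Finset.univ.erase i).filter (fun j => z j ≠ 0)).card ≤ 2 * δs) ↔
    (z ≠ 0 ∧ hammingNorm z < 2 * δs + 2) := by
  have key : ∀ i : Fin n, z i ≠ 0 →
      ((Finset.univ.erase i).filter (fun j => z j ≠ 0)).card + 1 = hammingNorm z := by
    intro i hi
    have h1 : (Finset.univ.erase i).filter (fun j => z j ≠ 0)
        = (Finset.univ.filter (fun j => z j ≠ 0)).erase i := by
      ext j; simp [Finset.mem_erase, Finset.mem_filter, and_comm]
    have hmem : i ∈ Finset.univ.filter (fun j => z j ≠ 0) := by simp [hi]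
    rw [h1, Finset.card_erase_of_mem hmem, hammingNorm]
    have : 1 ≤ (Finset.univ.filter (fun j => z j ≠ 0)).card :=
      Finset.card_pos.mpr ⟨i, hmem⟩
    omega
  constructor
  · rintro ⟨i, hi, hcard⟩
    refine ⟨fun h => hi (by simp [h]), ?_⟩
    have := key i hi; omega
  · rintro ⟨hz, hlt⟩
    obtain ⟨i, hi⟩ := Function.ne_iff.mp hz
    refine ⟨i, by simpa using hi, ?_⟩
    have := key i (by simpa using hi); omega

/-- If `H` is a parity check matrix of an `(n, k, d)` code with
`d ≥ 2δs + 2`, then `Hᵀ` is a valid ICSIE generator matrix for the clique of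
size `n`; consequently the optimal clique codelength is the minimum of `n - k`
over such codes. -/
theorem stmt13 {F : Type} [Field F] [DecidableEq F]
    (n k δs : ℕ) (hk : k ≤ n)
    (H : Matrix (Fin (n - k)) (Fin n) F)
    (hd : ∀ x : Fin n → F, H.mulVec x = 0 → x ≠ 0 →
      2 * δs + 2 ≤ hammingNorm x) :
    (∀ z : Fin n → F,
      (∃ i : Fin n, z i ≠ 0 ∧
        ((Finset.univ.erase i).filter (fun j => z j ≠ 0)).card ≤ 2 * δs) →
      Matrix.vecMul z H.transpose ≠ 0) ∧
    sInf {N : ℕ | ∃ G : Matrix (Fin n) (Fin N) F,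
        ∀ z : Fin n → F,
          (∃ i : Fin n, z i ≠ 0 ∧
            ((Finset.univ.erase i).filter (fun j => z j ≠ 0)).card ≤ 2 * δs) →
          Matrix.vecMul z G ≠ 0} =
      sInf {r : ℕ | ∃ H' : Matrix (Fin r) (Fin n) F,
        ∀ x : Fin n → F, H'.mulVec x = 0 → x ≠ 0 →
          2 * δs + 2 ≤ hammingNorm x} := by
  have main : ∀ (r : ℕ) (H' : Matrix (Fin r) (Fin n) F),
      (∀ x : Fin n → F, H'.mulVec x = 0 → x ≠ 0 → 2 * δs + 2 ≤ hammingNorm x) →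
      ∀ z : Fin n → F,
        (∃ i : Fin n, z i ≠ 0 ∧
          ((Finset.univ.erase i).filter (fun j => z j ≠ 0)).card ≤ 2 * δs) →
        Matrix.vecMul z H'.transpose ≠ 0 := by
    intro r H' hH' z hz hzero
    rw [Matrix.vecMul_transpose] at hzero
    obtain ⟨hne, hlt⟩ := (aux_equiv z).mp hz
    have := hH' z hzero hne
    omega
  refine ⟨main _ H hd, ?_⟩
  congr 1
  ext N
  constructor
  · rintro ⟨G, hG⟩
    refine ⟨G.transpose, fun x hx hne => ?_⟩
    by_contra hlt
    push_neg at hlt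
    exact hG x ((aux_equiv x).mpr ⟨hne, hlt⟩)
      (by rwa [Matrix.mulVec_transpose] at hx)
  · rintro ⟨H', hH'⟩
    exact ⟨H'.transpose, main _ H' hH'⟩
end

section
/- Let the conventional index coding problem (0, Ḡ) be constructed from the (δ_s, G)-ICSIE problem by deleting, for each receiver i, any min(2δ_s, |X_i|) indices from X_i. Then N_opt^q(0, Ḡ) ≤ N_opt^q(δ_s, G). Equivalently, I(q, Ḡ, 0) ⊆ I(q, G, δ_s), so any valid ICSIE generator matrix for (δ_s, G) is a valid index code generator matrix for Ḡ. -/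
/-- If the conventional index coding problem `(0, Ḡ)` is
obtained by deleting `min(2δs, |X_i|)` side information indices from each
receiver, then `I(q, Ḡ, 0) ⊆ I(q, G, δs)` and
`N_opt(0, Ḡ) ≤ N_opt(δs, G)`. -/
theorem stmt17 {F : Type} [Field F] [DecidableEq F]
    {n m : ℕ} (δs : ℕ)
    (X : Fin m → Finset (Fin n)) (f : Fin m → Fin n)
    (hf : ∀ i, f i ∉ X i)
    (X' : Fin m → Finset (Fin n))
    (hsub : ∀ i, X' i ⊆ X i)
    (hcard : ∀ i, (X' i).card = (X i).card - 2 * δs) :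
    (∀ z : Fin n → F,
      (∃ i : Fin m, z (f i) ≠ 0 ∧
        ((X' i).filter (fun j => z j ≠ 0)).card ≤ 2 * 0) →
      (∃ i : Fin m, z (f i) ≠ 0 ∧
        ((X i).filter (fun j => z j ≠ 0)).card ≤ 2 * δs)) ∧
    sInf {N : ℕ | ∃ G : Matrix (Fin n) (Fin N) F,
        ∀ z : Fin n → F,
          (∃ i : Fin m, z (f i) ≠ 0 ∧
            ((X' i).filter (fun j => z j ≠ 0)).card ≤ 2 * 0) →
          Matrix.vecMul z G ≠ 0} ≤
      sInf {N : ℕ | ∃ G : Matrix (Fin n) (Fin N) F,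
        ∀ z : Fin n → F,
          (∃ i : Fin m, z (f i) ≠ 0 ∧
            ((X i).filter (fun j => z j ≠ 0)).card ≤ 2 * δs) →
          Matrix.vecMul z G ≠ 0} := by

  have key : ∀ z : Fin n → F,
      (∃ i : Fin m, z (f i) ≠ 0 ∧
        ((X' i).filter (fun j => z j ≠ 0)).card ≤ 2 * 0) →
      (∃ i : Fin m, z (f i) ≠ 0 ∧
        ((X i).filter (fun j => z j ≠ 0)).card ≤ 2 * δs) := by
    rintro z ⟨i, hz, hc⟩
    refine ⟨i, hz, ?_⟩
    have h1 : (X i).filter (fun j => z j ≠ 0) ⊆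
        (X' i).filter (fun j => z j ≠ 0) ∪ (X i \ X' i) := by
      intro x hx
      simp only [Finset.mem_filter, Finset.mem_union, Finset.mem_sdiff] at hx ⊢
      by_cases hx' : x ∈ X' i
      · exact Or.inl ⟨hx', hx.2⟩
      · exact Or.inr ⟨hx.1, hx'⟩
    calc ((X i).filter (fun j => z j ≠ 0)).card
        ≤ ((X' i).filter (fun j => z j ≠ 0) ∪ (X i \ X' i)).card :=
          Finset.card_le_card h1
      _ ≤ ((X' i).filter (fun j => z j ≠ 0)).card + (X i \ X' i).card :=
          Finset.card_union_le _ _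
      _ ≤ 0 + (X i \ X' i).card := by omega
      _ = (X i).card - (X' i).card := by
          rw [Finset.card_sdiff_of_subset (hsub i)]; ring
      _ ≤ 2 * δs := by rw [hcard i]; omega
  refine ⟨key, ?_⟩
  have hne : {N : ℕ | ∃ G : Matrix (Fin n) (Fin N) F,
      ∀ z : Fin n → F,
        (∃ i : Fin m, z (f i) ≠ 0 ∧
          ((X i).filter (fun j => z j ≠ 0)).card ≤ 2 * δs) →
        Matrix.vecMul z G ≠ 0}.Nonempty := by
    refine ⟨n, (1 : Matrix (Fin n) (Fin n) F), ?_⟩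
    rintro z ⟨i, hz, -⟩
    rw [Matrix.vecMul_one]
    intro h
    exact hz (congrFun h (f i))
  have hmem := Nat.sInf_mem hne
  obtain ⟨G, hG⟩ := hmem
  exact Nat.sInf_le ⟨G, fun z hz => hG z (key z hz)⟩
end

section
/- N_opt^q(δ_s, G) ≥ γ(G), where γ(G) is the δ_s-generalized independence number of G (the largest size of a δ_s-generalized independent set). Indeed, if Q is a δ_s-generalized independent set then the rows of any valid ICSIE generator matrix indexed by Q are linearly independent. -/
lemma stmt18_aux {F : Type} [Field F] [DecidableEq F]
    {n m : ℕ} (δs : ℕ)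
    (X : Fin m → Finset (Fin n)) (f : Fin m → Fin n)
    (hf : ∀ i, f i ∉ X i)
    (Q : Finset (Fin n))
    (hQ : ∀ K : Finset (Fin n), K ⊆ Q → K.Nonempty →
        ∃ i : Fin m, ∃ Y' I' : Finset (Fin n),
          Y' ⊆ Finset.univ \ insert (f i) (X i) ∧ I' ⊆ X i ∧
          I'.card ≤ 2 * δs ∧ K = insert (f i) (Y' ∪ I'))
    (N : ℕ) (G : Matrix (Fin n) (Fin N) F)
    (hG : ∀ z : Fin n → F,
          (∃ i : Fin m, z (f i) ≠ 0 ∧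
            ((X i).filter (fun j => z j ≠ 0)).card ≤ 2 * δs) →
          Matrix.vecMul z G ≠ 0) :
    LinearIndependent F (fun j : {x // x ∈ Q} => G j.1) := by
  rw [Fintype.linearIndependent_iff]
  intro g hg
  by_contra hcon
  push_neg at hcon
  obtain ⟨i0, hi0⟩ := hcon
  set z : Fin n → F := fun j => if h : j ∈ Q then g ⟨j, h⟩ else 0 with hz
  have hzG : Matrix.vecMul z G = 0 := by
    funext k
    have : Matrix.vecMul z G k = ∑ j : Fin n, z j * G j k := rfl
    rw [this]
    have hsum : ∑ j : Fin n, z j * G j k = ∑ j ∈ Q, z j * G j k := by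
      rw [← Finset.sum_subset (Finset.subset_univ Q)]
      intro x _ hx
      simp [hz, hx]
    rw [hsum]
    have h0 := congrFun hg k
    simp only [Finset.sum_apply, Pi.smul_apply, Pi.zero_apply, smul_eq_mul] at h0
    have h1 : ∑ j ∈ Q, z j * G j k = ∑ x ∈ Q.attach, z x.1 * G x.1 k :=
      (Finset.sum_attach Q (fun j => z j * G j k)).symm
    have h2 : ∑ x ∈ Q.attach, z x.1 * G x.1 k = ∑ x : {x // x ∈ Q}, g x * G x.1 k := by
      apply Finset.sum_congr rfl
      intro x _
      simp [hz, x.2]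
    simp only [Pi.zero_apply]
    rw [h1, h2, h0]
  set K : Finset (Fin n) := Q.filter (fun j => z j ≠ 0) with hK
  have hKQ : K ⊆ Q := Finset.filter_subset _ _
  have hKne : K.Nonempty := by
    refine ⟨i0.1, ?_⟩
    simp only [hK, Finset.mem_filter]
    exact ⟨i0.2, by simp [hz, i0.2]; exact hi0⟩
  obtain ⟨i, Y', I', hY', hI', hIc, hKeq⟩ := hQ K hKQ hKne
  have hfiK : f i ∈ K := by rw [hKeq]; exact Finset.mem_insert_self _ _
  have hzfi : z (f i) ≠ 0 := (Finset.mem_filter.mp hfiK).2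
  have hsub : (X i).filter (fun j => z j ≠ 0) ⊆ I' := by
    intro j hj
    rw [Finset.mem_filter] at hj
    have hjK : j ∈ K := by
      rw [hK, Finset.mem_filter]
      refine ⟨?_, hj.2⟩
      by_contra hjQ
      exact hj.2 (by simp [hz, hjQ])
    rw [hKeq] at hjK
    rcases Finset.mem_insert.mp hjK with h | h
    · exact absurd (h ▸ hj.1) (hf i)
    · rcases Finset.mem_union.mp h with h | h
      · have := hY' h
        rw [Finset.mem_sdiff] at this
        exact absurd (Finset.mem_insert_of_mem hj.1) this.2
      · exact h
  exact hG z ⟨i, hzfi, le_trans (Finset.card_le_card hsub) hIc⟩ hzG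

/-- `N_opt ≥ γ(G)`, the `δs`-generalized independence number;
indeed the rows of any valid generator matrix indexed by a `δs`-generalized
independent set are linearly independent. -/
theorem stmt18 {F : Type} [Field F] [DecidableEq F]
    {n m : ℕ} (δs : ℕ)
    (X : Fin m → Finset (Fin n)) (f : Fin m → Fin n)
    (hf : ∀ i, f i ∉ X i) :
    (∀ Q : Finset (Fin n),
      (∀ K : Finset (Fin n), K ⊆ Q → K.Nonempty →
        ∃ i : Fin m, ∃ Y' I' : Finset (Fin n),
          Y' ⊆ Finset.univ \ insert (f i) (X i) ∧ I' ⊆ X i ∧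
          I'.card ≤ 2 * δs ∧ K = insert (f i) (Y' ∪ I')) →
      ∀ N : ℕ, ∀ G : Matrix (Fin n) (Fin N) F,
        (∀ z : Fin n → F,
          (∃ i : Fin m, z (f i) ≠ 0 ∧
            ((X i).filter (fun j => z j ≠ 0)).card ≤ 2 * δs) →
          Matrix.vecMul z G ≠ 0) →
        LinearIndependent F (fun j : {x // x ∈ Q} => G j.1)) ∧
    sSup {k : ℕ | ∃ Q : Finset (Fin n), Q.card = k ∧
        ∀ K : Finset (Fin n), K ⊆ Q → K.Nonempty →
          ∃ i : Fin m, ∃ Y' I' : Finset (Fin n),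
            Y' ⊆ Finset.univ \ insert (f i) (X i) ∧ I' ⊆ X i ∧
            I'.card ≤ 2 * δs ∧ K = insert (f i) (Y' ∪ I')} ≤
      sInf {N : ℕ | ∃ G : Matrix (Fin n) (Fin N) F,
        ∀ z : Fin n → F,
          (∃ i : Fin m, z (f i) ≠ 0 ∧
            ((X i).filter (fun j => z j ≠ 0)).card ≤ 2 * δs) →
          Matrix.vecMul z G ≠ 0} := by
  constructor
  · intro Q hQ N G hG
    exact stmt18_aux δs X f hf Q hQ N G hG
  · set T : Set ℕ := {N : ℕ | ∃ G : Matrix (Fin n) (Fin N) F,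
        ∀ z : Fin n → F,
          (∃ i : Fin m, z (f i) ≠ 0 ∧
            ((X i).filter (fun j => z j ≠ 0)).card ≤ 2 * δs) →
          Matrix.vecMul z G ≠ 0} with hT
    have hTne : T.Nonempty := by
      refine ⟨n, 1, ?_⟩
      intro z ⟨i, hzi, _⟩
      rw [Matrix.vecMul_one]
      intro h
      exact hzi (congrFun h (f i))
    apply csSup_le
    · exact ⟨0, ∅, rfl, fun K hK hKne => absurd (Finset.subset_empty.mp hK)
        (Finset.nonempty_iff_ne_empty.mp hKne)⟩
    · rintro k ⟨Q, hQc, hQ⟩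
      have hmem : sInf T ∈ T := Nat.sInf_mem hTne
      obtain ⟨G, hG⟩ := hmem
      have hli := stmt18_aux δs X f hf Q hQ (sInf T) G hG
      have := hli.fintype_card_le_finrank
      rw [Module.finrank_fintype_fun_eq_card, Fintype.card_coe, Fintype.card_fin] at this
      omega
end
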